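/- arXiv:math/9802047 — 4 statements merged into one kernel-verified Lean document; each statement's English description precedes it below -/
import Mathlib

section
/- The closure of the set of all complex zeros of reliability polynomials of connected multigraphs contains the closed unit disc {q ∈ ℂ : |q| ≤ 1}. -/
structure Multigraph where
  V : Type
  E : Type
  [fV : Fintype V]
  [dV : DecidableEq V]
  [fE : Fintype E]
  [dE : DecidableEq E]
  ends : E → Sym2 V

attribute [instance] Multigraph.fV Multigraph.dV Multigraph.fE Multigraph.dE

/-- The edges in `S` induce a connected spanning subgraph. -/
def Multigraph.ConnectedOn (G : Multigraph) (S : Finset G.E) : Prop :=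
  ∀ v w : G.V, Relation.ReflTransGen (fun a b => ∃ e ∈ S, G.ends e = s(a, b)) v w

def Multigraph.Connected (G : Multigraph) : Prop :=
  G.ConnectedOn Finset.univ

open Polynomial in
open scoped Classical in
/-- The reliability polynomial of a multigraph. -/
noncomputable def Multigraph.rel (G : Multigraph) : Polynomial ℂ :=
  ∑ S : Finset G.E,
    if G.ConnectedOn S then X ^ (Fintype.card G.E - S.card) * (1 - X) ^ S.card else 0

/-!
In `kC_n` a set of surviving edges spans a connected subgraph iff at most one of the `n` bundles
of parallel edges is deleted entirely, which gives `R_{kC_{m+1}}(q) = (1 - q^k)^m (1 + m q^k)`.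
So every `k`-th root of `-1/m` is a zero. In logarithmic coordinates these roots are
`(-log m + (2j + 1)πi) / k`; taking `m = ⌈|q|^{-k}⌉` and `j` so that `(2j + 1)π/k` is nearest to
`arg q`, they lie within `(log 2 + π)/k` of `log q`, so they accumulate at every `q` with
`0 < |q| ≤ 1`, while the roots `-1/m` accumulate at `0`.
-/

open Relation

namespace ZMod

variable {n : ℕ} [NeZero n]

lemma val_add_one_of_ne_neg_one {a : ZMod n} (h : a ≠ -1) : (a + 1).val = a.val + 1 := by
  obtain ⟨m, rfl⟩ : ∃ m, n = m + 1 := Nat.exists_eq_succ_of_ne_zero (NeZero.ne n)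
  have hne : a.val ≠ m := fun hm => h (val_injective _ (by rw [hm, val_neg_one]))
  have hlt : a.val + 1 < m + 1 := by have := a.val_lt; omega
  rw [← val_natCast_of_lt hlt, Nat.cast_succ, natCast_zmod_val]

def CycleAdj (D : Set (ZMod n)) (a b : ZMod n) : Prop :=
  ∃ c ∉ D, s(c, c + 1) = s(a, b)

lemma reflTransGen_cycleAdj_of_subset_singleton {D : Set (ZMod n)} {a₀ : ZMod n}
    (hD : D ⊆ {a₀}) (v : ZMod n) : ReflTransGen (CycleAdj D) (a₀ + 1) v := by
  suffices ∀ m, ∀ v : ZMod n, (v - (a₀ + 1)).val = m → ReflTransGen (CycleAdj D) (a₀ + 1) v from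
    this _ v rfl
  intro m
  induction m with
  | zero =>
    intro v hv
    rw [val_eq_zero, sub_eq_zero] at hv
    rw [hv]
  | succ m ih =>
    intro v hv
    have hc : v - 1 - (a₀ + 1) ≠ -1 := by
      intro h
      rw [show v - (a₀ + 1) = v - 1 - (a₀ + 1) + 1 by ring, h, neg_add_cancel, val_zero] at hv
      omega
    have hval : (v - 1 - (a₀ + 1)).val + 1 = m + 1 := by
      rw [← val_add_one_of_ne_neg_one hc, ← hv]
      exact congrArg val (by ring)
    have hcD : v - 1 ∉ D := fun h => hc (by rw [hD h]; ring)
    exact (ih (v - 1) (by omega)).tail ⟨v - 1, hcD, by rw [sub_add_cancel]⟩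

lemma not_reflTransGen_cycleAdj {D : Set (ZMod n)} {i j : ZMod n} (hi : i ∈ D) (hj : j ∈ D)
    (hij : i ≠ j) : ¬ ReflTransGen (CycleAdj D) (i + 1) i := by
  -- the arc from `i + 1` to `j` is closed under the deleted-edge adjacency
  let offset (v : ZMod n) : ℕ := (v - (i + 1)).val
  have offset_succ {c : ZMod n} (hc : c ≠ i) : offset (c + 1) = offset c + 1 := by
    rw [← val_add_one_of_ne_neg_one (by contrapose! hc; linear_combination hc)]
    exact congrArg val (by ring)
  have offset_inj : Function.Injective offset := fun a b h => by
    simpa using val_injective n h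
  have hstep : ∀ a b, CycleAdj D a b → (offset a ≤ offset j ↔ offset b ≤ offset j) := by
    rintro a b ⟨c, hc, hab⟩
    have hci : c ≠ i := fun h => hc (h ▸ hi)
    have hcj : offset c ≠ offset j := fun h => hc (offset_inj h ▸ hj)
    have key : offset c ≤ offset j ↔ offset (c + 1) ≤ offset j := by
      rw [offset_succ hci]; omega
    rcases Sym2.eq_iff.mp hab with ⟨rfl, rfl⟩ | ⟨rfl, rfl⟩
    exacts [key, key.symm]
  have hinv : ∀ a b, ReflTransGen (CycleAdj D) a b → (offset a ≤ offset j ↔ offset b ≤ offset j) :=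
    fun a b h => by
      induction h with
      | refl => rfl
      | tail _ hbc ih => exact ih.trans (hstep _ _ hbc)
  intro h
  obtain ⟨m, rfl⟩ : ∃ m, n = m + 1 := Nat.exists_eq_succ_of_ne_zero (NeZero.ne n)
  have ho₁ : offset (i + 1) = 0 := by simp [offset]
  have hoi : offset i = m := by simp [offset, val_neg_one]
  have hoj : offset j ≠ m := fun h => hij (offset_inj (h.trans hoi.symm)).symm
  have hlt : offset j < m + 1 := val_lt _
  have := hinv _ _ h
  omega

theorem forall_reflTransGen_cycleAdj_iff (D : Set (ZMod n)) :
    (∀ v w, ReflTransGen (CycleAdj D) v w) ↔ D.Subsingleton := by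
  constructor
  · intro h i hi j hj
    by_contra hij
    exact not_reflTransGen_cycleAdj hi hj hij (h _ _)
  · intro hD v w
    obtain ⟨a₀, ha₀⟩ : ∃ a₀, D ⊆ {a₀} := by
      rcases hD.eq_empty_or_singleton with rfl | ⟨a₀, rfl⟩
      exacts [⟨0, Set.empty_subset _⟩, ⟨a₀, subset_rfl⟩]
    have : Std.Symm (CycleAdj D) := ⟨fun a b ⟨c, hc, h⟩ => ⟨c, hc, h.trans Sym2.eq_swap⟩⟩
    exact (Std.Symm.symm _ _
      (reflTransGen_cycleAdj_of_subset_singleton ha₀ v)).trans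
      (reflTransGen_cycleAdj_of_subset_singleton ha₀ w)

end ZMod

open Finset

section FibreEquiv

variable {α β : Type*} [Fintype α] [Fintype β] [DecidableEq α] [DecidableEq β]

def Finset.prodEquivPi : Finset (α × β) ≃ (α → Finset β) where
  toFun S a := {b | (a, b) ∈ S}
  invFun f := {p | p.2 ∈ f p.1}
  left_inv S := by ext; simp
  right_inv f := by ext; simp

@[simp]
lemma Finset.mem_prodEquivPi_symm (f : α → Finset β) (p : α × β) :
    p ∈ Finset.prodEquivPi.symm f ↔ p.2 ∈ f p.1 := by
  simp [Finset.prodEquivPi]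

lemma Finset.card_prodEquivPi_symm (f : α → Finset β) :
    #(Finset.prodEquivPi.symm f) = ∑ a, #(f a) := by
  simp only [Finset.prodEquivPi, Equiv.coe_fn_symm_mk]
  rw [card_filter, Fintype.sum_prod_type]
  simp

lemma Finset.compl_prodEquivPi_symm (f : α → Finset β) :
    (Finset.prodEquivPi.symm f)ᶜ = Finset.prodEquivPi.symm fun a => (f a)ᶜ := by
  ext; simp

end FibreEquiv

section AtMostOne

variable {α γ R : Type*} [Fintype α] [DecidableEq α] [Fintype γ] [DecidableEq γ]

lemma ite_subsingleton_eq_add [AddCommMonoidWithOne R] (p : α → Prop) [DecidablePred p] :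
    (if {a | p a}.Subsingleton then (1 : R) else 0) =
      (if ∀ a, ¬ p a then 1 else 0) + ∑ b, if ∀ a, p a ↔ a = b then 1 else 0 := by
  by_cases hp : ∃ b, p b
  · obtain ⟨b₀, hb₀⟩ := hp
    have hnone : ¬ ∀ a, ¬ p a := fun h => h b₀ hb₀
    by_cases hs : {a | p a}.Subsingleton
    · have hunique (b : α) : (∀ a, p a ↔ a = b) ↔ b₀ = b :=
        ⟨fun h => (h b₀).1 hb₀, fun h a => h ▸ ⟨fun ha => hs ha hb₀, fun ha => ha ▸ hb₀⟩⟩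
      simp [hs, hnone, hunique]
    · obtain ⟨x, hx, y, hy, hxy⟩ := Set.not_subsingleton_iff.mp hs
      have hnot (b : α) : ¬ ∀ a, p a ↔ a = b := fun h => hxy (((h x).1 hx).trans ((h y).1 hy).symm)
      simp [hs, hnone, hnot]
  · simp only [not_exists] at hp
    simp [hp]

variable [CommRing R]

lemma sum_pi_ite_subsingleton_eq (w : γ → R) (c : γ) :
    ∑ f : α → γ, (if {a | f a = c}.Subsingleton then ∏ a, w (f a) else 0) =
      (∑ x, w x - w c) ^ Fintype.card α +
        Fintype.card α * w c * (∑ x, w x - w c) ^ (Fintype.card α - 1) := by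
  classical
  have hsum_ne : ∑ x, (if x = c then 0 else w x) = ∑ x, w x - w c := by
    rw [sum_ite, sum_const_zero, zero_add, filter_ne', sum_erase_eq_sub (mem_univ c)]
  have hsum_iff (a b : α) :
      ∑ x, (if x = c ↔ a = b then w x else 0) = if a = b then w c else ∑ x, w x - w c := by
    split_ifs with hab
    · simp [hab]
    · simpa [hab] using hsum_ne
  conv_lhs => enter [2, f]; rw [← mul_boole, ite_subsingleton_eq_add, mul_add, mul_sum]
  rw [sum_add_distrib, sum_comm]
  congr 1
  · calc _ = ∑ f : α → γ, ∏ a, (if f a = c then 0 else w (f a)) := by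
          refine sum_congr rfl fun f _ => ?_
          rw [← Fintype.prod_boole, ← prod_mul_distrib]
          exact prod_congr rfl fun a _ => by split_ifs <;> simp
      _ = _ := by
          rw [← Fintype.prod_sum fun (_ : α) x => if x = c then 0 else w x, hsum_ne, prod_const,
            card_univ]
  · calc _ = ∑ b : α, ∏ a, (if a = b then w c else ∑ x, w x - w c) := by
          refine sum_congr rfl fun b _ => ?_
          simp_rw [← hsum_iff, Fintype.prod_sum, ← Fintype.prod_boole, ← prod_mul_distrib]
          exact sum_congr rfl fun f _ => prod_congr rfl fun a _ => by split_ifs <;> simp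
      _ = _ := by
          simp [prod_ite, filter_eq', filter_ne', card_univ, mul_assoc]

end AtMostOne

namespace Multigraph

/-- The multigraph `kC_n`. -/
def cycle (n k : ℕ) [NeZero n] : Multigraph where
  V := ZMod n
  E := ZMod n × Fin k
  ends e := s(e.1, e.1 + 1)

theorem connectedOn_cycle_iff {n k : ℕ} [NeZero n] (S : Finset (ZMod n × Fin k)) :
    (cycle n k).ConnectedOn S ↔ {a | ∀ i, (a, i) ∉ S}.Subsingleton := by
  rw [← ZMod.forall_reflTransGen_cycleAdj_iff]
  have hadj : (fun a b => ∃ e ∈ S, (cycle n k).ends e = s(a, b)) =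
      ZMod.CycleAdj {a | ∀ i, (a, i) ∉ S} := by
    ext a b
    simp [ZMod.CycleAdj, cycle]
  exact hadj ▸ Iff.rfl

theorem connected_cycle {n k : ℕ} [NeZero n] (hk : k ≠ 0) : (cycle n k).Connected :=
  (connectedOn_cycle_iff univ).2 fun _ ha =>
    absurd (mem_univ _) (ha ⟨0, Nat.pos_of_ne_zero hk⟩)

open Polynomial in
theorem rel_cycle (n k : ℕ) :
    (cycle (n + 1) k).rel = (1 - X ^ k) ^ n * (1 + (n : ℂ[X]) * X ^ k) := by
  classical
  set w : Finset (Fin k) → ℂ[X] := fun s => X ^ #sᶜ * (1 - X) ^ #s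
  have hw_sum : ∑ s, w s = 1 := by
    have h := Fintype.sum_pow_mul_eq_add_pow (Fin k) (1 - X : ℂ[X]) X
    rw [sub_add_cancel, one_pow] at h
    rw [← h]
    exact sum_congr rfl fun s _ => by simp only [w]; rw [card_compl, mul_comm]
  have hw_empty : w ∅ = X ^ k := by simp [w]
  have hterm (f : ZMod (n + 1) → Finset (Fin k)) :
      (if {a | ∀ i, (a, i) ∉ prodEquivPi.symm f}.Subsingleton then
          (X : ℂ[X]) ^ #(prodEquivPi.symm f)ᶜ * (1 - X) ^ #(prodEquivPi.symm f) else 0) =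
        if {a | f a = ∅}.Subsingleton then ∏ a, w (f a) else 0 := by
    have hdead : {a | ∀ i, (a, i) ∉ prodEquivPi.symm f} = {a | f a = ∅} := by
      ext a; simp [eq_empty_iff_forall_notMem]
    simp only [hdead, compl_prodEquivPi_symm, card_prodEquivPi_symm, w, prod_mul_distrib,
      prod_pow_eq_pow_sum]
  rw [rel]
  change (∑ S : Finset (ZMod (n + 1) × Fin k), if (cycle (n + 1) k).ConnectedOn S then
    (X : ℂ[X]) ^ (Fintype.card (ZMod (n + 1) × Fin k) - #S) * (1 - X) ^ #S else 0) = _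
  simp only [connectedOn_cycle_iff, ← card_compl]
  rw [← Equiv.sum_comp prodEquivPi.symm]
  simp only [hterm]
  rw [sum_pi_ite_subsingleton_eq, hw_sum, hw_empty, ZMod.card]
  push_cast
  ring

end Multigraph

open Filter Topology Real Complex

lemma tendsto_of_abs_sub_le_div {f : ℕ → ℝ} {a C : ℝ} (h : ∀ k : ℕ, 0 < k → |f k - a| ≤ C / k) :
    Tendsto f atTop (𝓝 a) := by
  rw [tendsto_iff_norm_sub_tendsto_zero]
  refine squeeze_zero' (.of_forall fun _ => norm_nonneg _) ?_
    (tendsto_const_div_atTop_nhds_zero_nat C)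
  filter_upwards [eventually_gt_atTop 0] with k hk using h k hk

lemma tendsto_log_natCeil_exp_mul_div {u : ℝ} (hu : 0 ≤ u) :
    Tendsto (fun k : ℕ => Real.log ⌈Real.exp (k * u)⌉₊ / k) atTop (𝓝 u) := by
  refine tendsto_of_abs_sub_le_div (C := Real.log 2) fun k hk => ?_
  have hk' : (0 : ℝ) < k := Nat.cast_pos.2 hk
  set y := Real.exp (k * u)
  have hy : 1 ≤ y := Real.one_le_exp (by positivity)
  have hceil_ge : y ≤ ⌈y⌉₊ := Nat.le_ceil y
  have hceil_le : (⌈y⌉₊ : ℝ) ≤ 2 * y := by linarith [Nat.ceil_lt_add_one (zero_le_one.trans hy)]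
  have hlow : k * u ≤ Real.log ⌈y⌉₊ := by
    rw [← Real.log_exp (k * u)]; exact Real.log_le_log (by positivity) hceil_ge
  have hupp : Real.log ⌈y⌉₊ ≤ Real.log 2 + k * u := by
    rw [← Real.log_exp (k * u), ← Real.log_mul two_ne_zero (by positivity)]
    exact Real.log_le_log (by positivity) hceil_le
  have hsub : Real.log ⌈y⌉₊ / k - u = (Real.log ⌈y⌉₊ - k * u) / k := by field_simp
  rw [hsub, abs_div, abs_of_pos hk', abs_of_nonneg (by linarith)]
  gcongr
  linarith

lemma tendsto_odd_mul_pi_div (φ : ℝ) :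
    Tendsto (fun k : ℕ => (2 * ⌊k * φ / (2 * π)⌋ + 1) * π / k) atTop (𝓝 φ) := by
  refine tendsto_of_abs_sub_le_div (C := π) fun k hk => ?_
  have hk' : (0 : ℝ) < k := Nat.cast_pos.2 hk
  set x := k * φ / (2 * π)
  have hφ : φ = 2 * x * π / k := by simp only [x]; field_simp
  have hfloor := Int.floor_le x
  have hfloor' := Int.lt_floor_add_one x
  rw [hφ, ← sub_div, ← sub_mul, abs_div, abs_mul, abs_of_pos pi_pos, abs_of_pos hk']
  gcongr
  refine mul_le_of_le_one_left pi_pos.le (abs_le.2 ⟨?_, ?_⟩) <;> linarith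

lemma one_add_mul_exp_pow_eq_zero {m k : ℕ} (hm : m ≠ 0) (hk : k ≠ 0) (j : ℤ) :
    1 + m * Complex.exp ((-Real.log m + (2 * j + 1) * π * I) / k) ^ k = 0 := by
  have hm' : (0 : ℝ) < m := Nat.cast_pos.2 (Nat.pos_of_ne_zero hm)
  have hsplit : -(Real.log m : ℂ) + (2 * j + 1) * π * I =
      -Real.log m + j * (2 * π * I) + π * I := by
    ring
  rw [← Complex.exp_nat_mul, mul_div_cancel₀ _ (Nat.cast_ne_zero.2 hk), hsplit, Complex.exp_add,
    Complex.exp_add, Complex.exp_int_mul_two_pi_mul_I, Complex.exp_pi_mul_I, Complex.exp_neg,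
    ← Complex.ofReal_exp, Real.exp_log hm', Complex.ofReal_natCast]
  field_simp
  ring

lemma mem_closure_setOf_one_add_mul_pow_eq_zero {q₀ : ℂ} (h0 : q₀ ≠ 0) (h1 : ‖q₀‖ ≤ 1) :
    q₀ ∈ closure {q : ℂ | ∃ m k : ℕ, 1 + m * q ^ k = 0} := by
  set u := -Real.log ‖q₀‖
  have hu : 0 ≤ u := neg_nonneg.2 (Real.log_nonpos (norm_nonneg _) h1)
  set m : ℕ → ℕ := fun k => ⌈Real.exp (k * u)⌉₊
  set j : ℕ → ℤ := fun k => ⌊k * arg q₀ / (2 * π)⌋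
  set z : ℕ → ℂ := fun k => (-Real.log (m k) + (2 * j k + 1) * π * I) / k
  have hz : Tendsto z atTop (𝓝 (Complex.log q₀)) := by
    have hre := (tendsto_log_natCeil_exp_mul_div hu).neg.ofReal
    have him := (tendsto_odd_mul_pi_div (arg q₀)).ofReal.mul_const I
    convert hre.add him using 1
    · ext k; simp only [z]; push_cast; ring
    · simp [u, Complex.log]
  have hm (k : ℕ) : m k ≠ 0 := (Nat.ceil_pos.2 (Real.exp_pos _)).ne'
  have hexp := (Complex.continuous_exp.tendsto _).comp hz
  rw [Complex.exp_log h0] at hexp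
  refine mem_closure_of_tendsto hexp ?_
  filter_upwards [eventually_ne_atTop 0] with k hk
  exact ⟨m k, k, one_add_mul_exp_pow_eq_zero (hm k) hk (j k)⟩

lemma zero_mem_closure_setOf_one_add_mul_pow_eq_zero :
    (0 : ℂ) ∈ closure {q : ℂ | ∃ m k : ℕ, 1 + m * q ^ k = 0} := by
  have h : Tendsto (fun m : ℕ => -(1 / ((m : ℂ) + 1))) atTop (𝓝 0) := by
    simpa using (tendsto_one_div_add_atTop_nhds_zero_nat (𝕜 := ℂ)).neg
  refine mem_closure_of_tendsto h (.of_forall fun m => ⟨m + 1, 1, ?_⟩)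
  push_cast
  field_simp
  ring

theorem closedBall_subset_closure_setOf_one_add_mul_pow_eq_zero :
    Metric.closedBall (0 : ℂ) 1 ⊆ closure {q : ℂ | ∃ m k : ℕ, 1 + m * q ^ k = 0} := by
  intro q hq
  rcases eq_or_ne q 0 with rfl | h0
  · exact zero_mem_closure_setOf_one_add_mul_pow_eq_zero
  · exact mem_closure_setOf_one_add_mul_pow_eq_zero h0 (by simpa using hq)

/-- The closure of the set of complex zeros of reliability polynomials of connected
multigraphs contains the closed unit disc. -/
theorem stmt5 :
    Metric.closedBall (0 : ℂ) 1 ⊆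
      closure {q : ℂ | ∃ G : Multigraph, G.Connected ∧ (G.rel).eval q = 0} := by
  refine closedBall_subset_closure_setOf_one_add_mul_pow_eq_zero.trans (closure_mono ?_)
  rintro q ⟨m, k, hq⟩
  have hk : k ≠ 0 := by
    rintro rfl
    exact Nat.cast_add_one_ne_zero m (by linear_combination hq)
  exact ⟨Multigraph.cycle (m + 1) k, Multigraph.connected_cycle hk,
    by simp [Multigraph.rel_cycle, hq]⟩
end

section
/- Let P, Q, A be standard real polynomials with only real nonpositive zeros. Then P ≺ Q if and only if Q ≺ xP. Moreover, if P ≺ Q then P ≺ P + Q ≺ Q. -/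
open Polynomial

/-- A real polynomial is standard if it is zero or has positive leading coefficient. -/
def Standard (A : Polynomial ℝ) : Prop := A = 0 ∨ 0 < A.leadingCoeff

/-- A real polynomial has only real zeros (or is identically zero). -/
def RealRooted (A : Polynomial ℝ) : Prop :=
  A = 0 ∨ ∀ z : ℂ, (Polynomial.aeval z) A = 0 → z.im = 0

/-- A real polynomial has only real nonpositive zeros (or is identically zero). -/
def OnlyNonposZeros (A : Polynomial ℝ) : Prop :=
  A = 0 ∨ ∀ z : ℂ, (Polynomial.aeval z) A = 0 → z.im = 0 ∧ z.re ≤ 0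

open scoped Classical in
/-- The real roots of `A`, with multiplicity, listed in increasing order. -/
noncomputable def sroots (A : Polynomial ℝ) : List ℝ := A.roots.sort (· ≤ ·)

/-- `A` interlaces `B`: `deg B = deg A + 1` and the zeros satisfy
`θ₁ ≤ ξ₁ ≤ θ₂ ≤ ⋯ ≤ ξ_a ≤ θ_{a+1}`. -/
def Interlaces (A B : Polynomial ℝ) : Prop :=
  B.natDegree = A.natDegree + 1 ∧
    ∀ i < A.natDegree,
      (sroots B).getD i 0 ≤ (sroots A).getD i 0 ∧
        (sroots A).getD i 0 ≤ (sroots B).getD (i + 1) 0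

/-- `A` alternates left of `B`: `deg A = deg B` and the zeros satisfy
`ξ₁ ≤ θ₁ ≤ ξ₂ ≤ ⋯ ≤ ξ_a ≤ θ_a`. -/
def AltLeft (A B : Polynomial ℝ) : Prop :=
  A.natDegree = B.natDegree ∧
    (∀ i < A.natDegree, (sroots A).getD i 0 ≤ (sroots B).getD i 0) ∧
    (∀ i, i + 1 < A.natDegree → (sroots B).getD i 0 ≤ (sroots A).getD (i + 1) 0)

/-- `A ≺ B`: either `A` interlaces `B` or `A` alternates left of `B` (both polynomials
having only real zeros); by convention `0 ≺ B` and `A ≺ 0` always hold. -/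
def Prec (A B : Polynomial ℝ) : Prop :=
  A = 0 ∨ B = 0 ∨ (RealRooted A ∧ RealRooted B ∧ (Interlaces A B ∨ AltLeft A B))


/-! ### Auxiliary machinery -/

open scoped Classical in
noncomputable def cnt (A : Polynomial ℝ) (t : ℝ) : ℕ := Multiset.card (A.roots.filter (· ≤ t))

open scoped Classical in
noncomputable def cntlt (A : Polynomial ℝ) (t : ℝ) : ℕ := Multiset.card (A.roots.filter (· < t))

/-- card roots = natDegree -/
def rr' (A : Polynomial ℝ) : Prop := Multiset.card A.roots = A.natDegree

open scoped Classical in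
lemma sorted_getD_le_iff {l : List ℝ} (hl : l.Pairwise (· ≤ ·)) {i : ℕ} (hi : i < l.length) (t : ℝ) :
    l.getD i 0 ≤ t ↔ i < Multiset.card (Multiset.filter (· ≤ t) (l : Multiset ℝ)) := by
  induction l generalizing i with
  | nil => simp at hi
  | cons x xs ih =>
    have hx : ∀ b ∈ xs, x ≤ b := fun b hb => (List.pairwise_cons.mp hl).1 b hb
    have hxs : xs.Pairwise (· ≤ ·) := (List.pairwise_cons.mp hl).2
    have hcoe : ((x :: xs : List ℝ) : Multiset ℝ) = x ::ₘ (xs : Multiset ℝ) := rfl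
    rw [hcoe, Multiset.filter_cons]
    cases i with
    | zero =>
      simp only [List.getD_cons_zero]
      constructor
      · intro hxt
        simp [hxt]
      · intro h
        by_contra hxt
        push_neg at hxt
        have : Multiset.filter (· ≤ t) (xs : Multiset ℝ) = 0 := by
          rw [Multiset.filter_eq_nil]
          intro b hb
          have := hx b (by exact_mod_cast hb)
          push_neg
          linarith
        simp [if_neg (by push_neg; exact hxt : ¬ (x ≤ t)), this] at h
    | succ i =>
      simp only [List.getD_cons_succ]
      have hi' : i < xs.length := by simpa using hi
      rw [ih hxs hi']
      by_cases hxt : x ≤ t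
      · simp [hxt]
      · have h0 : Multiset.filter (· ≤ t) (xs : Multiset ℝ) = 0 := by
          rw [Multiset.filter_eq_nil]
          intro b hb
          have := hx b (by exact_mod_cast hb)
          intro hbt; exact hxt (le_trans this hbt)
        simp [hxt, h0]

lemma length_sroots (A : Polynomial ℝ) : (sroots A).length = Multiset.card A.roots :=
  Multiset.length_sort _

lemma getD_le_iff_cnt {A : Polynomial ℝ} (hA : rr' A) {i : ℕ} (hi : i < A.natDegree) (t : ℝ) :
    (sroots A).getD i 0 ≤ t ↔ i < cnt A t := by
  classical
  have hlen : i < (sroots A).length := by rw [length_sroots, hA]; exact hi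
  have h2 := sorted_getD_le_iff (Multiset.pairwise_sort (α := ℝ) A.roots (· ≤ ·))
    (by simpa [sroots] using hlen) t
  rw [Multiset.sort_eq] at h2
  simp only [sroots, cnt]
  convert h2 using 2

lemma cnt_le_card (A : Polynomial ℝ) (t : ℝ) : cnt A t ≤ Multiset.card A.roots := by
  classical
  exact Multiset.card_le_card (Multiset.filter_le _ _)

lemma interlaces_iff {A B : Polynomial ℝ} (hrA : rr' A) (hrB : rr' B)
    (hdeg : B.natDegree = A.natDegree + 1) :
    Interlaces A B ↔ ∀ t, cnt A t ≤ cnt B t ∧ cnt B t ≤ cnt A t + 1 := by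
  have hcA : ∀ t, cnt A t ≤ A.natDegree := fun t => hrA ▸ cnt_le_card A t
  have hcB : ∀ t, cnt B t ≤ B.natDegree := fun t => hrB ▸ cnt_le_card B t
  constructor
  · rintro ⟨-, h⟩ t
    constructor
    · by_contra hc
      push_neg at hc
      have h1 : cnt B t < A.natDegree := lt_of_lt_of_le hc (hcA t)
      have h2 : (sroots A).getD (cnt B t) 0 ≤ t := (getD_le_iff_cnt hrA h1 t).mpr hc
      have h3 := (h (cnt B t) h1).1
      have h4 : (sroots B).getD (cnt B t) 0 ≤ t := le_trans h3 h2
      have := (getD_le_iff_cnt hrB (by omega) t).mp h4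
      omega
    · by_contra hc
      push_neg at hc
      have hia : cnt A t < A.natDegree := by
        have := hcB t; omega
      have h2 : (sroots B).getD (cnt A t + 1) 0 ≤ t :=
        (getD_le_iff_cnt hrB (by omega) t).mpr hc
      have h3 := (h (cnt A t) hia).2
      have h4 : (sroots A).getD (cnt A t) 0 ≤ t := le_trans h3 h2
      have := (getD_le_iff_cnt hrA hia t).mp h4
      omega
  · intro h
    refine ⟨hdeg, fun i hi => ?_⟩
    constructor
    · set t := (sroots A).getD i 0 with ht
      have h1 : i < cnt A t := (getD_le_iff_cnt hrA hi t).mp le_rfl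
      have h2 : i < cnt B t := lt_of_lt_of_le h1 (h t).1
      exact (getD_le_iff_cnt hrB (by omega) t).mpr h2
    · set t := (sroots B).getD (i + 1) 0 with ht
      have h1 : i + 1 < cnt B t := (getD_le_iff_cnt hrB (by omega) t).mp le_rfl
      have h2 : i < cnt A t := by have := (h t).2; omega
      exact (getD_le_iff_cnt hrA hi t).mpr h2

lemma altLeft_iff {A B : Polynomial ℝ} (hrA : rr' A) (hrB : rr' B)
    (hdeg : A.natDegree = B.natDegree) :
    AltLeft A B ↔ ∀ t, cnt B t ≤ cnt A t ∧ cnt A t ≤ cnt B t + 1 := by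
  have hcA : ∀ t, cnt A t ≤ A.natDegree := fun t => hrA ▸ cnt_le_card A t
  have hcB : ∀ t, cnt B t ≤ B.natDegree := fun t => hrB ▸ cnt_le_card B t
  constructor
  · rintro ⟨-, h1, h2⟩ t
    constructor
    · by_contra hc
      push_neg at hc
      have hia : cnt A t < A.natDegree := by
        have := hcB t; omega
      have hB : (sroots B).getD (cnt A t) 0 ≤ t :=
        (getD_le_iff_cnt hrB (by omega) t).mpr hc
      have hA : (sroots A).getD (cnt A t) 0 ≤ t := le_trans (h1 _ hia) hB
      have := (getD_le_iff_cnt hrA hia t).mp hA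
      omega
    · by_contra hc
      push_neg at hc
      have hia : cnt B t + 1 < A.natDegree := lt_of_lt_of_le hc (hcA t)
      have hA : (sroots A).getD (cnt B t + 1) 0 ≤ t :=
        (getD_le_iff_cnt hrA hia t).mpr hc
      have hB : (sroots B).getD (cnt B t) 0 ≤ t := le_trans (h2 _ hia) hA
      have := (getD_le_iff_cnt hrB (by omega) t).mp hB
      omega
  · intro h
    refine ⟨hdeg, fun i hi => ?_, fun i hi => ?_⟩
    · set t := (sroots B).getD i 0 with ht
      have h1 : i < cnt B t := (getD_le_iff_cnt hrB (by omega) t).mp le_rfl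
      have h2 : i < cnt A t := lt_of_lt_of_le h1 (h t).1
      exact (getD_le_iff_cnt hrA hi t).mpr h2
    · set t := (sroots A).getD (i + 1) 0 with ht
      have h1 : i + 1 < cnt A t := (getD_le_iff_cnt hrA hi t).mp le_rfl
      have h2 : i < cnt B t := by have := (h t).2; omega
      exact (getD_le_iff_cnt hrB (by omega) t).mpr h2

lemma map_roots_of_real {A : Polynomial ℝ} (hA : A ≠ 0)
    (h : ∀ z : ℂ, (Polynomial.aeval z) A = 0 → z.im = 0) :
    (A.map (algebraMap ℝ ℂ)).roots = A.roots.map (algebraMap ℝ ℂ) := by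
  classical
  have hinj : Function.Injective (algebraMap ℝ ℂ) := (algebraMap ℝ ℂ).injective
  have hmapne : A.map (algebraMap ℝ ℂ) ≠ 0 := (Polynomial.map_ne_zero_iff hinj).mpr hA
  ext z
  by_cases hz : z.im = 0
  · have hz' : z = (algebraMap ℝ ℂ) z.re := by
      apply Complex.ext <;> simp [hz]
    rw [hz', Polynomial.count_roots, Multiset.count_map_eq_count' _ _ hinj,
      Polynomial.count_roots]
    exact (Polynomial.eq_rootMultiplicity_map hinj z.re).symm
  · have h1 : z ∉ (A.map (algebraMap ℝ ℂ)).roots := by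
      intro hmem
      have := Polynomial.isRoot_of_mem_roots hmem
      have : (Polynomial.aeval z) A = 0 := by
        rwa [Polynomial.aeval_def, ← Polynomial.eval_map]
      exact hz (h z this)
    have h2 : z ∉ A.roots.map (algebraMap ℝ ℂ) := by
      intro hmem
      obtain ⟨r, _, hr⟩ := Multiset.mem_map.mp hmem
      apply hz; rw [← hr]; simp
    rw [Multiset.count_eq_zero_of_notMem h1, Multiset.count_eq_zero_of_notMem h2]

lemma rr'_iff_realRooted {A : Polynomial ℝ} (hA : A ≠ 0) :
    (∀ z : ℂ, (Polynomial.aeval z) A = 0 → z.im = 0) ↔ rr' A := by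
  classical
  have hinj : Function.Injective (algebraMap ℝ ℂ) := (algebraMap ℝ ℂ).injective
  have hmapne : A.map (algebraMap ℝ ℂ) ≠ 0 := (Polynomial.map_ne_zero_iff hinj).mpr hA
  have hcardC : Multiset.card (A.map (algebraMap ℝ ℂ)).roots
      = (A.map (algebraMap ℝ ℂ)).natDegree := by
    rw [← Polynomial.splits_iff_card_roots]
    exact IsAlgClosed.splits _
  have hdegmap : (A.map (algebraMap ℝ ℂ)).natDegree = A.natDegree :=
    Polynomial.natDegree_map (algebraMap ℝ ℂ)
  constructor
  · intro h
    have := map_roots_of_real hA h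
    rw [rr', ← hdegmap, ← hcardC, this, Multiset.card_map]
  · intro h z hz
    have hsplits : A.Splits := Polynomial.splits_iff_card_roots.mpr h
    have hroots := (Polynomial.roots_map_of_injective_of_card_eq_natDegree (f := algebraMap ℝ ℂ) hinj h).symm
    have hzmem : z ∈ (A.map (algebraMap ℝ ℂ)).roots := by
      rw [Polynomial.mem_roots hmapne]
      rwa [Polynomial.IsRoot.def, Polynomial.eval_map, ← Polynomial.aeval_def]
    obtain ⟨r, _, hr⟩ := Multiset.mem_map.mp (hroots ▸ hzmem)
    rw [← hr]; simp

lemma roots_nonpos {A : Polynomial ℝ} (hA : A ≠ 0)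
    (h : ∀ z : ℂ, (Polynomial.aeval z) A = 0 → z.im = 0 ∧ z.re ≤ 0) :
    ∀ r ∈ A.roots, r ≤ 0 := by
  intro r hr
  have hroot : A.eval r = 0 := Polynomial.isRoot_of_mem_roots hr
  have : (Polynomial.aeval ((algebraMap ℝ ℂ) r)) A = 0 := by
    rw [Polynomial.aeval_algebraMap_apply_eq_algebraMap_eval, hroot, map_zero]
  have := (h _ this).2
  simpa using this

open scoped Classical in
/-- Sign of a real-rooted polynomial off its roots. -/
lemma sign_eval {A : Polynomial ℝ} (hlc : 0 < A.leadingCoeff) (hrr : rr' A)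
    {t : ℝ} (ht : t ∉ A.roots) :
    0 < (-1 : ℝ) ^ (Multiset.card (A.roots.filter (fun r => t < r))) * A.eval t := by
  classical
  have hfact := Polynomial.C_leadingCoeff_mul_prod_multiset_X_sub_C (p := A) hrr
  have heval : A.eval t
      = A.leadingCoeff * ((A.roots.map fun a => t - a).prod) := by
    conv_lhs => rw [← hfact]
    rw [Polynomial.eval_mul, Polynomial.eval_C, Polynomial.eval_multiset_prod]
    rw [Multiset.map_map,
      show (eval t ∘ fun a : ℝ => X - C a) = (fun a : ℝ => t - a) from
        funext (fun a => by simp)]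
  have hsplit : A.roots.filter (fun r => t < r) + A.roots.filter (fun r => ¬ t < r) = A.roots :=
    Multiset.filter_add_not _ _
  set f₁ := A.roots.filter (fun r => t < r) with hf₁
  set f₂ := A.roots.filter (fun r => ¬ t < r) with hf₂
  have hprod : ((A.roots.map fun a => t - a).prod)
      = ((f₁.map fun a => t - a).prod) * ((f₂.map fun a => t - a).prod) := by
    rw [← hsplit, Multiset.map_add, Multiset.prod_add]
  have h2pos : 0 < (f₂.map fun a => t - a).prod := by
    apply Multiset.prod_pos
    intro x hx
    obtain ⟨a, ha, rfl⟩ := Multiset.mem_map.mp hx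
    have ha' := Multiset.mem_filter.mp ha
    have h1 : a ≤ t := not_lt.mp ha'.2
    have h2 : a ≠ t := fun h => ht (h ▸ ha'.1)
    have : a < t := lt_of_le_of_ne h1 h2
    linarith
  have h1eq : (f₁.map fun a => t - a) = (f₁.map fun a => a - t).map Neg.neg := by
    rw [Multiset.map_map]
    apply Multiset.map_congr rfl
    intro x hx; simp [neg_sub]
  have h1pos : 0 < (f₁.map fun a => a - t).prod := by
    apply Multiset.prod_pos
    intro x hx
    obtain ⟨a, ha, rfl⟩ := Multiset.mem_map.mp hx
    have ha' := Multiset.mem_filter.mp ha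
    linarith [ha'.2]
  have h1prod : (f₁.map fun a => t - a).prod
      = (-1 : ℝ) ^ (Multiset.card f₁) * (f₁.map fun a => a - t).prod := by
    rw [h1eq, Multiset.prod_map_neg]
    simp [Multiset.card_map]
  rw [heval, hprod, h1prod]
  have hsq : (-1 : ℝ) ^ (Multiset.card f₁) * (-1 : ℝ) ^ (Multiset.card f₁) = 1 := by
    rw [← mul_pow]; norm_num
  have := mul_pos hlc (mul_pos h1pos h2pos)
  calc (0:ℝ) < A.leadingCoeff * ((f₁.map fun a => a - t).prod * (f₂.map fun a => t - a).prod) := this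
    _ = (-1 : ℝ) ^ (Multiset.card f₁) *
        (A.leadingCoeff * ((-1 : ℝ) ^ (Multiset.card f₁) * (f₁.map fun a => a - t).prod
          * (f₂.map fun a => t - a).prod)) := by
        rw [show ∀ x y z w : ℝ, x * (y * (x * z * w)) = (x * x) * (y * (z * w)) from fun x y z w => by ring, hsq]
        ring

/-- weak IVT for polynomials -/
lemma poly_ivt {f : Polynomial ℝ} {a b : ℝ} (hab : a < b) (h : f.eval a * f.eval b < 0) :
    ∃ c, c ∈ Set.Ioo a b ∧ f.eval c = 0 := by
  have hc : ContinuousOn (fun x => f.eval x) (Set.Icc a b) := (f.continuous_aeval).continuousOn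
  rcases mul_neg_iff.mp h with ⟨ha, hb⟩ | ⟨ha, hb⟩
  · have := intermediate_value_Ioo' (le_of_lt hab) hc
    have h0 : (0:ℝ) ∈ Set.Ioo (f.eval b) (f.eval a) := ⟨hb, ha⟩
    obtain ⟨c, hc1, hc2⟩ := this h0
    exact ⟨c, hc1, hc2⟩
  · have := intermediate_value_Ioo (le_of_lt hab) hc
    have h0 : (0:ℝ) ∈ Set.Ioo (f.eval a) (f.eval b) := ⟨ha, hb⟩
    obtain ⟨c, hc1, hc2⟩ := this h0
    exact ⟨c, hc1, hc2⟩

/-- A point far to the left where a polynomial of degree n ≥ 1 has sign (-1)^n,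
  and below a given bound. -/
lemma exists_far_left {R : Polynomial ℝ} (hR : R ≠ 0) (hdeg : 0 < R.natDegree)
    (hlc : 0 < R.leadingCoeff) (c : ℝ) :
    ∃ w < c, 0 < (-1 : ℝ) ^ R.natDegree * R.eval w := by
  classical
  set n := R.natDegree
  set S : Polynomial ℝ := C ((-1 : ℝ) ^ n) * (R.comp (-X)) with hS
  have hcompne : R.comp (-X) ≠ 0 := by
    intro h
    apply hR
    have := congrArg (fun p => p.comp (-X)) h
    simpa [Polynomial.comp_assoc] using this
  have hdegcomp : (R.comp (-X)).natDegree = n := by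
    rw [Polynomial.natDegree_comp]
    simp
    rfl
  have hlcS : 0 < S.leadingCoeff := by
    rw [hS, Polynomial.leadingCoeff_mul, Polynomial.leadingCoeff_C]
    have hlccomp : (R.comp (-X)).leadingCoeff = R.leadingCoeff * (-1 : ℝ) ^ n := by
      rw [Polynomial.leadingCoeff_comp (by simp : (-X : Polynomial ℝ).natDegree ≠ 0)]
      simp
      exact Or.inl rfl
    rw [hlccomp]
    rcases Nat.even_or_odd n with he | ho
    · rw [he.neg_one_pow]; simpa using hlc
    · rw [ho.neg_one_pow]; simp; nlinarith
  have hdegS : 0 < S.degree := by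
    have hne : S ≠ 0 := fun h => by simp [h] at hlcS
    have : S.natDegree = n := by
      rw [hS, Polynomial.natDegree_C_mul (by positivity : ((-1:ℝ)^n) ≠ 0)]
      exact hdegcomp
    rw [Polynomial.degree_eq_natDegree hne, this]
    exact_mod_cast hdeg
  have htend := Polynomial.tendsto_atTop_of_leadingCoeff_nonneg S hdegS (le_of_lt hlcS)
  have hev : ∀ᶠ x in Filter.atTop, 0 < S.eval x := htend.eventually_gt_atTop 0
  obtain ⟨x, hx1, hx2⟩ := ((hev.and (Filter.eventually_gt_atTop (-c))).exists)
  refine ⟨-x, by linarith, ?_⟩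
  have : S.eval x = (-1:ℝ)^n * R.eval (-x) := by
    rw [hS]
    simp [Polynomial.eval_comp]
  rw [← this]
  exact hx1

open scoped Classical in
lemma cnt_eq_cntlt_add_count (A : Polynomial ℝ) (r : ℝ) :
    cnt A r = cntlt A r + Multiset.count r A.roots := by
  classical
  rw [cnt, cntlt]
  have : A.roots.filter (· ≤ r) = A.roots.filter (· < r) + A.roots.filter (· = r) := by
    have h1 := Multiset.filter_add_filter (· < r) (· = r) A.roots
    have h2 : Multiset.filter (fun a => a < r ∨ a = r) A.roots = A.roots.filter (· ≤ r) := by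
      apply Multiset.filter_congr
      intro x _
      constructor
      · rintro (h | h) <;> simp [le_of_lt, h, le_of_eq]
      · intro h; rcases lt_or_eq_of_le h with h | h
        · exact Or.inl h
        · exact Or.inr h
    have h3 : Multiset.filter (fun a => a < r ∧ a = r) A.roots = 0 := by
      rw [Multiset.filter_eq_nil]
      rintro a _ ⟨h1, h2⟩; exact absurd (h2 ▸ h1) (lt_irrefl r)
    rw [h2, h3, add_zero] at h1
    exact h1.symm
  rw [this, Multiset.card_add]
  congr 1
  rw [Multiset.filter_eq', Multiset.card_replicate]

lemma cnt_mono (A : Polynomial ℝ) {s t : ℝ} (h : s ≤ t) : cnt A s ≤ cnt A t := by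
  classical
  apply Multiset.card_le_card
  apply Multiset.monotone_filter_right
  intro x hx
  exact le_trans hx h

lemma cntlt_le_cnt (A : Polynomial ℝ) (t : ℝ) : cntlt A t ≤ cnt A t := by
  classical
  apply Multiset.card_le_card
  apply Multiset.monotone_filter_right
  intro x hx
  exact le_of_lt hx

/-- there is a point below x capturing exactly the roots of P and Q below x -/
lemma gap_point (P Q : Polynomial ℝ) (x : ℝ) :
    ∃ t < x, cnt P t = cntlt P x ∧ cnt Q t = cntlt Q x := by
  classical
  have key : ∀ t, t < x → (∀ r, (r ∈ P.roots ∨ r ∈ Q.roots) → r < x → r ≤ t) →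
      cnt P t = cntlt P x ∧ cnt Q t = cntlt Q x := by
    intro t ht hcap
    constructor <;> [skip; skip] <;>
    · unfold cnt cntlt
      congr 1
      apply Multiset.filter_congr
      intro r hr
      constructor
      · intro h1; exact lt_of_le_of_lt h1 ht
      · intro h1; exact hcap r (by first | exact Or.inl hr | exact Or.inr hr) h1
  set S := (P.roots + Q.roots).filter (· < x) with hs
  by_cases hS : S = 0
  · refine ⟨x - 1, by linarith, key (x-1) (by linarith) ?_⟩
    intro r hr hrx
    exfalso
    have : r ∈ S := by
      rw [hs, Multiset.mem_filter]
      refine ⟨Multiset.mem_add.mpr ?_, hrx⟩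
      exact hr
    rw [hS] at this
    simp at this
  · have hSne : S.toFinset.Nonempty := by
      rw [Multiset.toFinset_nonempty]
      exact hS
    set t := S.toFinset.max' hSne with htdef
    have htS : t ∈ S := Multiset.mem_toFinset.mp (S.toFinset.max'_mem hSne)
    have htx : t < x := (Multiset.mem_filter.mp htS).2
    refine ⟨t, htx, key t htx ?_⟩
    intro r hr hrx
    apply S.toFinset.le_max'
    rw [Multiset.mem_toFinset, hs, Multiset.mem_filter]
    exact ⟨Multiset.mem_add.mpr hr, hrx⟩

open scoped Classical in
lemma cnt_full {A : Polynomial ℝ} (hnonpos : ∀ r ∈ A.roots, r ≤ 0) {t : ℝ} (ht : 0 ≤ t) :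
    cnt A t = Multiset.card A.roots := by
  classical
  unfold cnt
  congr 1
  rw [Multiset.filter_eq_self]
  intro r hr
  exact le_trans (hnonpos r hr) ht

open scoped Classical in
lemma cnt_linear_mul {A : Polynomial ℝ} (hA : A ≠ 0) (r t : ℝ) :
    cnt ((X - C r) * A) t = cnt A t + if r ≤ t then 1 else 0 := by
  classical
  have hne : (X - C r) * A ≠ 0 := mul_ne_zero (Polynomial.X_sub_C_ne_zero r) hA
  unfold cnt
  rw [Polynomial.roots_mul hne, Polynomial.roots_X_sub_C, Multiset.filter_add,
    Multiset.card_add, Multiset.filter_singleton]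
  by_cases h : r ≤ t <;> simp [h, add_comm]

open scoped Classical in
lemma cnt_compl (A : Polynomial ℝ) (t : ℝ) :
    Multiset.card (A.roots.filter (fun r => t < r)) + cnt A t = Multiset.card A.roots := by
  classical
  have h2 : A.roots.filter (fun a => ¬ t < a) = A.roots.filter (· ≤ t) :=
    Multiset.filter_congr (fun x _ => not_lt)
  rw [cnt, ← h2, ← Multiset.card_add, Multiset.filter_add_not]

open scoped Classical in
theorem coprime_master (ε : ℕ) (hε : ε ≤ 1) (P Q : Polynomial ℝ) (hP : P ≠ 0) (hQ : Q ≠ 0)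
    (hlcP : 0 < P.leadingCoeff) (hlcQ : 0 < Q.leadingCoeff) (hrP : rr' P) (hrQ : rr' Q)
    (hdeg : Q.natDegree = P.natDegree + ε)
    (hyp : ∀ t, cnt Q t ≤ cnt P t + ε ∧ cnt P t + ε ≤ cnt Q t + 1)
    (hcop : ∀ r, r ∈ P.roots → r ∉ Q.roots) :
    (P + Q ≠ 0) ∧ (P + Q).natDegree = Q.natDegree ∧ rr' (P + Q) ∧
      ∀ t, cnt Q t ≤ cnt (P + Q) t ∧ cnt (P + Q) t ≤ cnt P t + ε := by
  classical
  set n := Q.natDegree with hn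
  set R := P + Q with hR
  -- Step 0 : degree facts for R
  have hcoeffn : 0 < R.coeff n := by
    have hQn : Q.coeff n = Q.leadingCoeff := rfl
    rcases Nat.lt_or_ge ε 1 with hc | hc
    · -- ε = 0 case: degrees equal
      have hε0 : ε = 0 := by omega
      have hPn : P.coeff n = P.leadingCoeff := by
        rw [hdeg, hε0, Nat.add_zero]
        rfl
      rw [hR, Polynomial.coeff_add, hPn, hQn]
      linarith
    · -- if ε = 1, P.natDegree < n
      have hε1 : ε = 1 := by omega
      have hPlt : P.natDegree < n := by omega
      have hPn : P.coeff n = 0 := Polynomial.coeff_eq_zero_of_natDegree_lt hPlt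
      rw [hR, Polynomial.coeff_add, hPn, hQn]
      linarith
  have hRne : R ≠ 0 := by
    intro h
    rw [h] at hcoeffn
    simp at hcoeffn
  have hdegR : R.natDegree = n := by
    apply le_antisymm
    · rw [hR]
      exact (Polynomial.natDegree_add_le_iff_left _ _ le_rfl).mpr (by omega)
    · exact Polynomial.le_natDegree_of_ne_zero (ne_of_gt hcoeffn)
  have hlcR : 0 < R.leadingCoeff := by
    rwa [Polynomial.leadingCoeff, hdegR]
  -- Step 1 : strict count versions
  have hlt : ∀ x, cntlt Q x ≤ cntlt P x + ε ∧ cntlt P x + ε ≤ cntlt Q x + 1 := by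
    intro x
    obtain ⟨t, _, h1, h2⟩ := gap_point P Q x
    have := hyp t
    omega
  -- Step 2 : roots are simple
  have hcop' : ∀ r, r ∈ Q.roots → r ∉ P.roots := fun r hr hp => hcop r hp hr
  have hndP : P.roots.Nodup := by
    rw [Multiset.nodup_iff_count_le_one]
    intro r
    by_contra hc
    push_neg at hc
    have e1 := cnt_eq_cntlt_add_count P r
    have e2 := cnt_eq_cntlt_add_count Q r
    have h1 := hyp r
    have h2 := hlt r
    have hqc : 1 ≤ Multiset.count r Q.roots := by omega
    have hpc : r ∈ P.roots := Multiset.count_pos.mp (by omega)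
    exact hcop r hpc (Multiset.count_pos.mp (by omega))
  have hndQ : Q.roots.Nodup := by
    rw [Multiset.nodup_iff_count_le_one]
    intro r
    by_contra hc
    push_neg at hc
    have e1 := cnt_eq_cntlt_add_count P r
    have e2 := cnt_eq_cntlt_add_count Q r
    have h1 := hyp r
    have h2 := hlt r
    have hqc : r ∈ Q.roots := Multiset.count_pos.mp (by omega)
    exact hcop r (Multiset.count_pos.mp (by omega)) hqc
  set QF := Q.roots.toFinset with hQF
  set PF := P.roots.toFinset with hPF
  have hcardQF : QF.card = n := by
    rw [hQF, Multiset.toFinset_card_eq_card_iff_nodup.mpr hndQ, hrQ]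
  -- facts at roots of Q
  have hthetaP : ∀ θ ∈ Q.roots, cnt P θ = cntlt P θ := by
    intro θ hθ
    have : Multiset.count θ P.roots = 0 :=
      Multiset.count_eq_zero_of_notMem (hcop' θ hθ)
    have := cnt_eq_cntlt_add_count P θ
    omega
  have hthetaQ : ∀ θ ∈ Q.roots, cnt Q θ = cntlt Q θ + 1 := by
    intro θ hθ
    have h1 : Multiset.count θ Q.roots = 1 := Multiset.count_eq_one_of_mem hndQ hθ
    have := cnt_eq_cntlt_add_count Q θ
    omega
  -- the multiset of roots below a point
  set M : ℝ → Multiset ℝ := fun θ => (P.roots + Q.roots).filter (· < θ) with hM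
  have hMmem : ∀ θ p, p ∈ M θ ↔ ((p ∈ P.roots ∨ p ∈ Q.roots) ∧ p < θ) := by
    intro θ p
    rw [hM]
    simp only [Multiset.mem_filter, Multiset.mem_add]
  -- max of roots below θ
  set sf : ℝ → ℝ := fun θ =>
    if h : (M θ).toFinset.Nonempty then (M θ).toFinset.max' h else 0 with hsfdef
  have hsf : ∀ θ, (M θ).toFinset.Nonempty →
      ((sf θ ∈ P.roots ∨ sf θ ∈ Q.roots) ∧ sf θ < θ ∧
        ∀ p, (p ∈ P.roots ∨ p ∈ Q.roots) → p < θ → p ≤ sf θ) := by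
    intro θ hne
    have hsfeq : sf θ = (M θ).toFinset.max' hne := by
      simp only [hsfdef, dif_pos hne]
    have hmem : sf θ ∈ M θ := by
      rw [hsfeq]
      exact Multiset.mem_toFinset.mp ((M θ).toFinset.max'_mem hne)
    have h1 := (hMmem θ (sf θ)).mp hmem
    refine ⟨h1.1, h1.2, ?_⟩
    intro p hp hpθ
    rw [hsfeq]
    apply Finset.le_max'
    rw [Multiset.mem_toFinset, hMmem]
    exact ⟨hp, hpθ⟩
  -- no roots between sf θ and θ : count identities
  have hgapP : ∀ θ, (M θ).toFinset.Nonempty → cntlt P θ = cnt P (sf θ) := by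
    intro θ hne
    obtain ⟨_, hlt', hmax⟩ := hsf θ hne
    unfold cntlt cnt
    congr 1
    apply Multiset.filter_congr
    intro r hr
    constructor
    · intro h; exact hmax r (Or.inl hr) h
    · intro h; exact lt_of_le_of_lt h hlt'
  have hgapQ : ∀ θ, (M θ).toFinset.Nonempty → cntlt Q θ = cnt Q (sf θ) := by
    intro θ hne
    obtain ⟨_, hlt', hmax⟩ := hsf θ hne
    unfold cntlt cnt
    congr 1
    apply Multiset.filter_congr
    intro r hr
    constructor
    · intro h; exact hmax r (Or.inr hr) h
    · intro h; exact lt_of_le_of_lt h hlt'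
  -- sf θ is always a root of P (when it exists), for θ a root of Q
  have hsfP : ∀ θ ∈ Q.roots, ∀ hne : (M θ).toFinset.Nonempty,
      sf θ ∈ P.roots ∧ sf θ ∉ Q.roots ∧ cntlt Q (sf θ) = cntlt P (sf θ) + ε := by
    intro θ hθ hne
    obtain ⟨hmem, hlt', hmax⟩ := hsf θ hne
    have hcase : sf θ ∈ P.roots := by
      rcases hmem with h | h
      · exact h
      · exfalso
        -- s = sf θ is a root of Q: contradiction
        have hsP : sf θ ∉ P.roots := hcop' _ h
        have e1 : cnt Q θ = cntlt Q θ + 1 := hthetaQ θ hθ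
        have e2 : cnt P θ = cntlt P θ := hthetaP θ hθ
        have e3 : cntlt Q θ = cnt Q (sf θ) := hgapQ θ hne
        have e4 : cntlt P θ = cnt P (sf θ) := hgapP θ hne
        have e5 : cnt Q (sf θ) = cntlt Q (sf θ) + 1 := by
          have h1 : Multiset.count (sf θ) Q.roots = 1 := Multiset.count_eq_one_of_mem hndQ h
          have := cnt_eq_cntlt_add_count Q (sf θ)
          omega
        have e6 : cnt P (sf θ) = cntlt P (sf θ) := by
          have : Multiset.count (sf θ) P.roots = 0 := Multiset.count_eq_zero_of_notMem hsP
          have := cnt_eq_cntlt_add_count P (sf θ)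
          omega
        have h1 := hyp θ
        have h2 := hlt (sf θ)
        omega
    have hsQ : sf θ ∉ Q.roots := hcop _ hcase
    refine ⟨hcase, hsQ, ?_⟩
    have e5 : cnt Q (sf θ) = cntlt Q (sf θ) := by
      have : Multiset.count (sf θ) Q.roots = 0 := Multiset.count_eq_zero_of_notMem hsQ
      have := cnt_eq_cntlt_add_count Q (sf θ)
      omega
    have e6 : cnt P (sf θ) = cntlt P (sf θ) + 1 := by
      have h1 : Multiset.count (sf θ) P.roots = 1 := Multiset.count_eq_one_of_mem hndP hcase
      have := cnt_eq_cntlt_add_count P (sf θ)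
      omega
    have h1 := hyp (sf θ)
    have h2 := hlt (sf θ)
    omega
  -- Step 4 : existence of a root of R below each root of Q
  have hZex : ∀ θ ∈ Q.roots, ∃ z, z < θ ∧ R.eval z = 0 ∧
      ∀ p, (p ∈ P.roots ∨ p ∈ Q.roots) → p < θ → p < z := by
    intro θ hθ
    have hθP : θ ∉ P.roots := hcop' θ hθ
    have hevalRθ : R.eval θ = P.eval θ := by
      have : Q.eval θ = 0 := Polynomial.isRoot_of_mem_roots hθ
      rw [hR, Polynomial.eval_add, this, add_zero]
    set kPθ := Multiset.card (P.roots.filter (fun r => θ < r)) with hkP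
    have hsign1 : 0 < (-1 : ℝ) ^ kPθ * P.eval θ := sign_eval hlcP hrP hθP
    have ecP : kPθ + cnt P θ = P.natDegree := by rw [hkP, cnt_compl P θ, hrP]
    by_cases hne : (M θ).toFinset.Nonempty
    · -- general case : sf θ exists
      obtain ⟨hsP, hsQ, heq⟩ := hsfP θ hθ hne
      obtain ⟨hmem, hlt', hmax⟩ := hsf θ hne
      set s := sf θ with hs
      set kQs := Multiset.card (Q.roots.filter (fun r => s < r)) with hkQ
      have hsign2 : 0 < (-1 : ℝ) ^ kQs * Q.eval s := sign_eval hlcQ hrQ hsQ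
      have ecQ : kQs + cnt Q s = n := by rw [hkQ, cnt_compl Q s, hrQ]
      have e2 : cnt P θ = cntlt P θ := hthetaP θ hθ
      have e4 : cntlt P θ = cnt P s := hgapP θ hne
      have e6 : cnt P s = cntlt P s + 1 := by
        have h1 : Multiset.count s P.roots = 1 := Multiset.count_eq_one_of_mem hndP hsP
        have := cnt_eq_cntlt_add_count P s
        omega
      have e5 : cnt Q s = cntlt Q s := by
        have : Multiset.count s Q.roots = 0 := Multiset.count_eq_zero_of_notMem hsQ
        have := cnt_eq_cntlt_add_count Q s
        omega
      have hodd : Odd (kPθ + kQs) := by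
        rw [Nat.odd_iff]
        omega
      have hprodneg : R.eval s * R.eval θ < 0 := by
        have hevalRs : R.eval s = Q.eval s := by
          have : P.eval s = 0 := Polynomial.isRoot_of_mem_roots hsP
          rw [hR, Polynomial.eval_add, this, zero_add]
        have hm := mul_pos hsign1 hsign2
        have hpow : (-1 : ℝ) ^ kPθ * (-1 : ℝ) ^ kQs = -1 := by
          rw [← pow_add]
          exact Odd.neg_one_pow hodd
        have : 0 < -(P.eval θ * Q.eval s) := by
          calc 0 < (-1 : ℝ) ^ kPθ * P.eval θ * ((-1 : ℝ) ^ kQs * Q.eval s) := hm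
            _ = ((-1 : ℝ) ^ kPθ * (-1 : ℝ) ^ kQs) * (P.eval θ * Q.eval s) := by ring
            _ = -(P.eval θ * Q.eval s) := by rw [hpow]; ring
        rw [hevalRs, hevalRθ]
        nlinarith [this]
      obtain ⟨z, hz1, hz2⟩ := poly_ivt hlt' hprodneg
      exact ⟨z, hz1.2, hz2, fun p hp hpθ => lt_of_le_of_lt (hmax p hp hpθ) hz1.1⟩
    · -- θ is the smallest root: use far left point
      have hMempty : M θ = 0 := by
        by_contra h
        exact hne (Multiset.toFinset_nonempty.mpr h)
      have hnoroot : ∀ p, (p ∈ P.roots ∨ p ∈ Q.roots) → ¬ p < θ := by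
        intro p hp hpθ
        have : p ∈ M θ := (hMmem θ p).mpr ⟨hp, hpθ⟩
        rw [hMempty] at this
        simp at this
      have hcntltP : cntlt P θ = 0 := by
        rw [cntlt, Multiset.card_eq_zero, Multiset.filter_eq_nil]
        exact fun a ha => hnoroot a (Or.inl ha)
      have hcntltQ : cntlt Q θ = 0 := by
        rw [cntlt, Multiset.card_eq_zero, Multiset.filter_eq_nil]
        exact fun a ha => hnoroot a (Or.inr ha)
      have hε1 : ε = 1 := by
        have h1 := hyp θ
        have e1 : cnt Q θ = cntlt Q θ + 1 := hthetaQ θ hθ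
        have e2 : cnt P θ = cntlt P θ := hthetaP θ hθ
        omega
      have hn1 : 0 < n := by omega
      obtain ⟨w, hw1, hw2⟩ := exists_far_left hRne (hdegR ▸ hn1) hlcR θ
      have hkPθ : kPθ = P.natDegree := by
        have e2 : cnt P θ = cntlt P θ := hthetaP θ hθ
        omega
      have hodd : Odd (kPθ + n) := by
        rw [Nat.odd_iff]
        omega
      have hprodneg : R.eval w * R.eval θ < 0 := by
        rw [hdegR] at hw2
        have hm := mul_pos hw2 hsign1
        have hpow : (-1 : ℝ) ^ n * (-1 : ℝ) ^ kPθ = -1 := by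
          rw [← pow_add]
          apply Odd.neg_one_pow
          rw [Nat.odd_iff] at hodd ⊢
          omega
        have : 0 < -(R.eval w * P.eval θ) := by
          calc 0 < (-1 : ℝ) ^ n * R.eval w * ((-1 : ℝ) ^ kPθ * P.eval θ) := hm
            _ = ((-1 : ℝ) ^ n * (-1 : ℝ) ^ kPθ) * (R.eval w * P.eval θ) := by ring
            _ = -(R.eval w * P.eval θ) := by rw [hpow]; ring
        rw [hevalRθ]
        nlinarith [this]
      obtain ⟨z, hz1, hz2⟩ := poly_ivt hw1 hprodneg
      exact ⟨z, hz1.2, hz2, fun p hp hpθ => absurd hpθ (hnoroot p hp)⟩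
  -- Step 5 : choice function
  set zf : ℝ → ℝ := fun θ =>
    if h : ∃ z, z < θ ∧ R.eval z = 0 ∧
        ∀ p, (p ∈ P.roots ∨ p ∈ Q.roots) → p < θ → p < z
    then Classical.choose h else 0 with hzfdef
  have hzf : ∀ θ ∈ Q.roots, zf θ < θ ∧ R.eval (zf θ) = 0 ∧
      ∀ p, (p ∈ P.roots ∨ p ∈ Q.roots) → p < θ → p < zf θ := by
    intro θ hθ
    have h := hZex θ hθ
    rw [hzfdef]
    simp only [dif_pos h]
    exact Classical.choose_spec h
  -- Step 6 : strict monotonicity / injectivity on roots of Q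
  have hmono : ∀ θ₁ ∈ Q.roots, ∀ θ₂ ∈ Q.roots, θ₁ < θ₂ → zf θ₁ < zf θ₂ := by
    intro θ₁ h₁ θ₂ h₂ hlt12
    have ha := (hzf θ₁ h₁).1
    have hb := (hzf θ₂ h₂).2.2 θ₁ (Or.inr h₁) hlt12
    linarith
  have hinj : Set.InjOn zf QF := by
    intro a ha b hb hab
    by_contra hne
    rcases lt_or_gt_of_ne hne with h | h
    · have := hmono a (Multiset.mem_toFinset.mp ha) b (Multiset.mem_toFinset.mp hb) h
      linarith [hab.le, hab.ge]
    · have := hmono b (Multiset.mem_toFinset.mp hb) a (Multiset.mem_toFinset.mp ha) h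
      linarith [hab.le, hab.ge]
  -- Step 7 : R has exactly n simple roots given by zf
  set Zimg := QF.image zf with hZimg
  have hcardZ : Zimg.card = n := by
    rw [hZimg, Finset.card_image_of_injOn hinj, hcardQF]
  have hZsub : Zimg ⊆ R.roots.toFinset := by
    intro z hz
    obtain ⟨θ, hθ, rfl⟩ := Finset.mem_image.mp hz
    rw [Multiset.mem_toFinset, Polynomial.mem_roots hRne]
    exact (hzf θ (Multiset.mem_toFinset.mp hθ)).2.1
  have hcardchain : Multiset.card R.roots = n := by
    have h1 : n ≤ R.roots.toFinset.card := hcardZ ▸ Finset.card_le_card hZsub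
    have h2 : R.roots.toFinset.card ≤ Multiset.card R.roots := Multiset.toFinset_card_le _
    have h3 : Multiset.card R.roots ≤ R.natDegree := Polynomial.card_roots' R
    omega
  have hrrR : rr' R := by rw [rr', hcardchain, hdegR]
  have hndR : R.roots.Nodup := by
    have h1 : R.roots.toFinset.card = Multiset.card R.roots := by
      have h1 : n ≤ R.roots.toFinset.card := hcardZ ▸ Finset.card_le_card hZsub
      have h2 : R.roots.toFinset.card ≤ Multiset.card R.roots := Multiset.toFinset_card_le _
      omega
    exact Multiset.toFinset_card_eq_card_iff_nodup.mp h1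
  have hZeq : Zimg = R.roots.toFinset := by
    apply Finset.eq_of_subset_of_card_le hZsub
    rw [hcardZ]
    have : R.roots.toFinset.card ≤ Multiset.card R.roots := Multiset.toFinset_card_le _
    omega
  -- counting translations
  have hcnt_fin : ∀ (A : Polynomial ℝ), A.roots.Nodup → ∀ t,
      cnt A t = (A.roots.toFinset.filter (· ≤ t)).card := by
    intro A hnd t
    have hval : A.roots.toFinset.val = A.roots := by
      rw [Multiset.toFinset_val, Multiset.Nodup.dedup hnd]
    rw [cnt, Finset.card_def, Finset.filter_val, hval]
  have hcntR : ∀ t, cnt R t = (Zimg.filter (· ≤ t)).card := by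
    intro t
    rw [hcnt_fin R hndR t, hZeq]
  have hcntQfin : ∀ t, cnt Q t = (QF.filter (· ≤ t)).card := fun t => hcnt_fin Q hndQ t
  have hcntPfin : ∀ t, cnt P t = (PF.filter (· ≤ t)).card := fun t => hcnt_fin P hndP t
  refine ⟨hRne, hdegR, hrrR, fun t => ⟨?_, ?_⟩⟩
  · -- lower bound : cnt Q t ≤ cnt R t
    rw [hcntQfin t, hcntR t]
    apply Finset.card_le_card_of_injOn zf
    · intro θ hθ
      have hθ' := Finset.mem_filter.mp hθ
      have hθQ : θ ∈ Q.roots := Multiset.mem_toFinset.mp hθ'.1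
      have hz := hzf θ hθQ
      exact Finset.mem_filter.mpr ⟨Finset.mem_image_of_mem zf hθ'.1,
        le_trans (le_of_lt hz.1) hθ'.2⟩
    · apply hinj.mono
      intro x hx
      simp only [Finset.coe_filter, Set.mem_setOf_eq] at hx
      simp only [Finset.mem_coe]
      exact hx.1
  · -- upper bound : cnt R t ≤ cnt P t + ε
    set Bset := QF.filter (fun θ => zf θ ≤ t) with hBset
    have hBsub : ∀ θ ∈ Bset, θ ∈ Q.roots ∧ zf θ ≤ t := by
      intro θ hθ
      have := Finset.mem_filter.mp hθ
      exact ⟨Multiset.mem_toFinset.mp this.1, this.2⟩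
    have himg : Zimg.filter (· ≤ t) = Bset.image zf := by
      ext z
      constructor
      · intro hz
        obtain ⟨hz1, hz2⟩ := Finset.mem_filter.mp hz
        obtain ⟨θ, hθ, rfl⟩ := Finset.mem_image.mp hz1
        exact Finset.mem_image.mpr ⟨θ, Finset.mem_filter.mpr ⟨hθ, hz2⟩, rfl⟩
      · intro hz
        obtain ⟨θ, hθ, rfl⟩ := Finset.mem_image.mp hz
        obtain ⟨hθ1, hθ2⟩ := Finset.mem_filter.mp hθ
        exact Finset.mem_filter.mpr ⟨Finset.mem_image_of_mem zf hθ1, hθ2⟩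
    have hinjB : Set.InjOn zf Bset := by
      apply hinj.mono
      intro x hx
      have := Finset.mem_filter.mp (Finset.mem_coe.mp hx)
      exact Finset.mem_coe.mpr this.1
    have hcardB : (Zimg.filter (· ≤ t)).card = Bset.card := by
      rw [himg, Finset.card_image_of_injOn hinjB]
    set B₁ := Bset.filter (fun θ => (M θ).toFinset.Nonempty) with hB₁
    set B₂ := Bset.filter (fun θ => ¬ (M θ).toFinset.Nonempty) with hB₂
    have hsplitB : B₁.card + B₂.card = Bset.card :=
      Finset.card_filter_add_card_filter_not _
    have hB₂card : B₂.card ≤ ε := by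
      rcases Nat.lt_or_ge ε 1 with h | h
      · -- ε = 0 : B₂ is empty
        have hε0 : ε = 0 := by omega
        rw [hε0]
        rw [Nat.le_zero, Finset.card_eq_zero]
        rw [Finset.eq_empty_iff_forall_notMem]
        intro θ hθ
        obtain ⟨hθB, hθne⟩ := Finset.mem_filter.mp hθ
        have hθQ : θ ∈ Q.roots := (hBsub θ hθB).1
        have e1 := hthetaQ θ hθQ
        have e2 := hthetaP θ hθQ
        have h1 := hyp θ
        rw [hε0] at h1
        have hpos : 0 < cntlt P θ := by omega
        rw [cntlt, Multiset.card_pos] at hpos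
        obtain ⟨p, hp⟩ := Multiset.exists_mem_of_ne_zero hpos
        have hp' := Multiset.mem_filter.mp hp
        apply hθne
        rw [Multiset.toFinset_nonempty]
        intro hc
        have : p ∈ M θ := (hMmem θ p).mpr ⟨Or.inl hp'.1, hp'.2⟩
        rw [hc] at this
        simp at this
      · -- ε = 1 : at most one element
        have hε1 : ε = 1 := by omega
        rw [hε1]
        apply Finset.card_le_one.mpr
        intro a ha b hb
        by_contra hne'
        obtain ⟨haB, hane⟩ := Finset.mem_filter.mp ha
        obtain ⟨hbB, hbne⟩ := Finset.mem_filter.mp hb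
        have haQ : a ∈ Q.roots := (hBsub a haB).1
        have hbQ : b ∈ Q.roots := (hBsub b hbB).1
        rcases lt_or_gt_of_ne hne' with h' | h'
        · apply hbne
          rw [Multiset.toFinset_nonempty]
          intro hc
          have : a ∈ M b := (hMmem b a).mpr ⟨Or.inr haQ, h'⟩
          rw [hc] at this; simp at this
        · apply hane
          rw [Multiset.toFinset_nonempty]
          intro hc
          have : b ∈ M a := (hMmem a b).mpr ⟨Or.inr hbQ, h'⟩
          rw [hc] at this; simp at this
    have hB₁card : B₁.card ≤ (PF.filter (· ≤ t)).card := by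
      apply Finset.card_le_card_of_injOn sf
      · intro θ hθ
        obtain ⟨hθB, hθne⟩ := Finset.mem_filter.mp hθ
        obtain ⟨hθQ, hθt⟩ := hBsub θ hθB
        obtain ⟨hsP, hsQ, -⟩ := hsfP θ hθQ hθne
        obtain ⟨-, hsθ, -⟩ := hsf θ hθne
        have hslt : sf θ < zf θ := (hzf θ hθQ).2.2 (sf θ) (Or.inl hsP) hsθ
        refine Finset.mem_filter.mpr ⟨Multiset.mem_toFinset.mpr hsP, ?_⟩
        linarith
      · intro a ha b hb hab
        obtain ⟨haB, hane⟩ := Finset.mem_filter.mp (Finset.mem_coe.mp ha)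
        obtain ⟨hbB, hbne⟩ := Finset.mem_filter.mp (Finset.mem_coe.mp hb)
        have haQ : a ∈ Q.roots := (hBsub a haB).1
        have hbQ : b ∈ Q.roots := (hBsub b hbB).1
        by_contra hne'
        rcases lt_or_gt_of_ne hne' with h' | h'
        · have h1 : sf a < a := (hsf a hane).2.1
          have h2 : a ≤ sf b := (hsf b hbne).2.2 a (Or.inr haQ) h'
          linarith [hab.le, hab.ge]
        · have h1 : sf b < b := (hsf b hbne).2.1
          have h2 : b ≤ sf a := (hsf a hane).2.2 b (Or.inr hbQ) h'
          linarith [hab.le, hab.ge]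
    rw [hcntR t, hcntPfin t] at *
    omega

theorem master (ε : ℕ) (hε : ε ≤ 1) (n : ℕ) : ∀ (P Q : Polynomial ℝ), Q.natDegree = n →
    P ≠ 0 → Q ≠ 0 → 0 < P.leadingCoeff → 0 < Q.leadingCoeff → rr' P → rr' Q →
    Q.natDegree = P.natDegree + ε →
    (∀ t, cnt Q t ≤ cnt P t + ε ∧ cnt P t + ε ≤ cnt Q t + 1) →
    (P + Q ≠ 0) ∧ (P + Q).natDegree = Q.natDegree ∧ rr' (P + Q) ∧
      ∀ t, cnt Q t ≤ cnt (P + Q) t ∧ cnt (P + Q) t ≤ cnt P t + ε := by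
  induction n using Nat.strong_induction_on with
  | _ n IH =>
  intro P Q hQn hP hQ hlcP hlcQ hrP hrQ hdeg hyp
  by_cases hcop : ∀ r, r ∈ P.roots → r ∉ Q.roots
  · exact coprime_master ε hε P Q hP hQ hlcP hlcQ hrP hrQ hdeg hyp hcop
  · push_neg at hcop
    obtain ⟨r, hrPmem, hrQmem⟩ := hcop
    have hPr : P.IsRoot r := Polynomial.isRoot_of_mem_roots hrPmem
    have hQr : Q.IsRoot r := Polynomial.isRoot_of_mem_roots hrQmem
    have hPfac : (X - C r) * (P /ₘ (X - C r)) = P :=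
      (Polynomial.mul_divByMonic_eq_iff_isRoot).mpr hPr
    have hQfac : (X - C r) * (Q /ₘ (X - C r)) = Q :=
      (Polynomial.mul_divByMonic_eq_iff_isRoot).mpr hQr
    set P₁ := P /ₘ (X - C r) with hP₁def
    set Q₁ := Q /ₘ (X - C r) with hQ₁def
    have hXr : (X - C r : Polynomial ℝ) ≠ 0 := Polynomial.X_sub_C_ne_zero r
    have hP₁ : P₁ ≠ 0 := by
      intro h; apply hP; rw [← hPfac, h, mul_zero]
    have hQ₁ : Q₁ ≠ 0 := by
      intro h; apply hQ; rw [← hQfac, h, mul_zero]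
    have hrootsP : P.roots = r ::ₘ P₁.roots := by
      conv_lhs => rw [← hPfac]
      rw [Polynomial.roots_mul (hPfac ▸ hP), Polynomial.roots_X_sub_C,
        Multiset.singleton_add]
    have hrootsQ : Q.roots = r ::ₘ Q₁.roots := by
      conv_lhs => rw [← hQfac]
      rw [Polynomial.roots_mul (hQfac ▸ hQ), Polynomial.roots_X_sub_C,
        Multiset.singleton_add]
    have hdegP : P.natDegree = P₁.natDegree + 1 := by
      conv_lhs => rw [← hPfac]
      rw [Polynomial.natDegree_mul hXr hP₁, Polynomial.natDegree_X_sub_C]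
      ring
    have hdegQ : Q.natDegree = Q₁.natDegree + 1 := by
      conv_lhs => rw [← hQfac]
      rw [Polynomial.natDegree_mul hXr hQ₁, Polynomial.natDegree_X_sub_C]
      ring
    have hlcP₁ : 0 < P₁.leadingCoeff := by
      have : P.leadingCoeff = P₁.leadingCoeff := by
        conv_lhs => rw [← hPfac]
        rw [Polynomial.leadingCoeff_mul, (Polynomial.monic_X_sub_C r).leadingCoeff, one_mul]
      linarith [this ▸ hlcP]
    have hlcQ₁ : 0 < Q₁.leadingCoeff := by
      have : Q.leadingCoeff = Q₁.leadingCoeff := by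
        conv_lhs => rw [← hQfac]
        rw [Polynomial.leadingCoeff_mul, (Polynomial.monic_X_sub_C r).leadingCoeff, one_mul]
      linarith [this ▸ hlcQ]
    have hrP₁ : rr' P₁ := by
      have h1 : Multiset.card P.roots = Multiset.card P₁.roots + 1 := by
        rw [hrootsP, Multiset.card_cons]
      have := hrP
      rw [rr'] at this ⊢
      omega
    have hrQ₁ : rr' Q₁ := by
      have h1 : Multiset.card Q.roots = Multiset.card Q₁.roots + 1 := by
        rw [hrootsQ, Multiset.card_cons]
      have := hrQ
      rw [rr'] at this ⊢
      omega
    have hcntP : ∀ t, cnt P t = cnt P₁ t + if r ≤ t then 1 else 0 := by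
      intro t
      conv_lhs => rw [← hPfac]
      exact cnt_linear_mul hP₁ r t
    have hcntQ : ∀ t, cnt Q t = cnt Q₁ t + if r ≤ t then 1 else 0 := by
      intro t
      conv_lhs => rw [← hQfac]
      exact cnt_linear_mul hQ₁ r t
    have hdeg₁ : Q₁.natDegree = P₁.natDegree + ε := by omega
    have hyp₁ : ∀ t, cnt Q₁ t ≤ cnt P₁ t + ε ∧ cnt P₁ t + ε ≤ cnt Q₁ t + 1 := by
      intro t
      have h1 := hyp t
      have h2 := hcntP t
      have h3 := hcntQ t
      by_cases h : r ≤ t <;> simp [h] at h2 h3 <;> omega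
    have hQ₁n : Q₁.natDegree < n := by omega
    obtain ⟨hR₁ne, hdegR₁, hrrR₁, hcntR₁⟩ :=
      IH Q₁.natDegree hQ₁n P₁ Q₁ rfl hP₁ hQ₁ hlcP₁ hlcQ₁ hrP₁ hrQ₁ hdeg₁ hyp₁
    have hRfac : P + Q = (X - C r) * (P₁ + Q₁) := by
      rw [mul_add, hPfac, hQfac]
    have hRne : P + Q ≠ 0 := by
      rw [hRfac]
      exact mul_ne_zero hXr hR₁ne
    have hrootsR : (P + Q).roots = r ::ₘ (P₁ + Q₁).roots := by
      rw [hRfac, Polynomial.roots_mul (hRfac ▸ hRne), Polynomial.roots_X_sub_C,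
        Multiset.singleton_add]
    have hdegR : (P + Q).natDegree = Q.natDegree := by
      rw [hRfac, Polynomial.natDegree_mul hXr hR₁ne, Polynomial.natDegree_X_sub_C]
      omega
    have hrrR : rr' (P + Q) := by
      rw [rr', hrootsR, Multiset.card_cons, hdegR]
      have := hrrR₁
      rw [rr'] at this
      omega
    have hcntR : ∀ t, cnt (P + Q) t = cnt (P₁ + Q₁) t + if r ≤ t then 1 else 0 := by
      intro t
      rw [hRfac]
      exact cnt_linear_mul hR₁ne r t
    refine ⟨hRne, hdegR, hrrR, fun t => ?_⟩
    have h1 := hcntR₁ t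
    have h2 := hcntP t
    have h3 := hcntQ t
    have h4 := hcntR t
    by_cases h : r ≤ t <;> simp [h] at h2 h3 h4 <;> omega


/-! ### final assembly helpers -/

lemma realRooted_of_onlyNonpos {A : Polynomial ℝ} (h : OnlyNonposZeros A) : RealRooted A := by
  rcases h with h | h
  · exact Or.inl h
  · exact Or.inr fun z hz => (h z hz).1

lemma rr'_of_onlyNonpos {A : Polynomial ℝ} (hA : A ≠ 0) (h : OnlyNonposZeros A) : rr' A := by
  rcases h with h | h
  · exact absurd h hA
  · exact (rr'_iff_realRooted hA).mp fun z hz => (h z hz).1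

lemma nonpos_roots_of_onlyNonpos {A : Polynomial ℝ} (hA : A ≠ 0) (h : OnlyNonposZeros A) :
    ∀ r ∈ A.roots, r ≤ 0 := by
  rcases h with h | h
  · exact absurd h hA
  · exact roots_nonpos hA h

lemma prec_refl {A : Polynomial ℝ} (hA' : OnlyNonposZeros A) : Prec A A := by
  rcases eq_or_ne A 0 with h | h
  · exact Or.inl h
  · refine Or.inr (Or.inr ⟨realRooted_of_onlyNonpos hA', realRooted_of_onlyNonpos hA', Or.inr ?_⟩)
    have hr := rr'_of_onlyNonpos h hA'
    exact (altLeft_iff hr hr rfl).mpr fun t => ⟨le_rfl, Nat.le_succ _⟩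

lemma XP_ne {P : Polynomial ℝ} (hP : P ≠ 0) : X * P ≠ 0 :=
  mul_ne_zero Polynomial.X_ne_zero hP

lemma natDegree_XP {P : Polynomial ℝ} (hP : P ≠ 0) : (X * P).natDegree = P.natDegree + 1 := by
  rw [Polynomial.natDegree_mul Polynomial.X_ne_zero hP, Polynomial.natDegree_X]
  ring

lemma cnt_XP {P : Polynomial ℝ} (hP : P ≠ 0) (t : ℝ) :
    cnt (X * P) t = cnt P t + if (0:ℝ) ≤ t then 1 else 0 := by
  have h : (X : Polynomial ℝ) = X - C 0 := by simp
  rw [h]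
  exact cnt_linear_mul hP 0 t

lemma rr'_XP {P : Polynomial ℝ} (hP : P ≠ 0) (hr : rr' P) : rr' (X * P) := by
  rw [rr', Polynomial.roots_mul (XP_ne hP), Polynomial.roots_X, Multiset.card_add,
    natDegree_XP hP]
  rw [rr'] at hr
  simp [hr]
  omega

lemma realRooted_XP {P : Polynomial ℝ} (h : RealRooted P) : RealRooted (X * P) := by
  rcases h with h | h
  · left; rw [h, mul_zero]
  · right
    intro z hz
    rw [map_mul, Polynomial.aeval_X, mul_eq_zero] at hz
    rcases hz with hz | hz
    · rw [hz]; rfl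
    · exact h z hz

/-- Lemma 2.3(a),(d): for standard polynomials `P, Q` with only nonpositive zeros,
`P ≺ Q` iff `Q ≺ xP`; moreover if `P ≺ Q` then `P ≺ P + Q ≺ Q`. -/
theorem stmt8 (P Q : Polynomial ℝ)
    (hP : Standard P) (hQ : Standard Q)
    (hP' : OnlyNonposZeros P) (hQ' : OnlyNonposZeros Q) :
    (Prec P Q ↔ Prec Q (X * P)) ∧
      (Prec P Q → Prec P (P + Q) ∧ Prec (P + Q) Q) := by
  constructor
  · -- part (a)
    constructor
    · intro hPQ
      rcases eq_or_ne P 0 with hP0 | hP0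
      · exact Or.inr (Or.inl (by rw [hP0, mul_zero]))
      rcases eq_or_ne Q 0 with hQ0 | hQ0
      · exact Or.inl hQ0
      have hrP : rr' P := rr'_of_onlyNonpos hP0 hP'
      have hrQ : rr' Q := rr'_of_onlyNonpos hQ0 hQ'
      have hnpP := nonpos_roots_of_onlyNonpos hP0 hP'
      have hnpQ := nonpos_roots_of_onlyNonpos hQ0 hQ'
      have hrXP : rr' (X * P) := rr'_XP hP0 hrP
      have hRRQ : RealRooted Q := realRooted_of_onlyNonpos hQ'
      have hRRXP : RealRooted (X * P) := realRooted_XP (realRooted_of_onlyNonpos hP')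
      rcases hPQ with h | h | ⟨-, -, hIA⟩
      · exact absurd h hP0
      · exact absurd h hQ0
      have hfullP : ∀ t, (0:ℝ) ≤ t → cnt P t = P.natDegree := by
        intro t ht; rw [cnt_full hnpP ht, hrP]
      have hfullQ : ∀ t, (0:ℝ) ≤ t → cnt Q t = Q.natDegree := by
        intro t ht; rw [cnt_full hnpQ ht, hrQ]
      rcases hIA with hInt | hAlt
      · -- Interlaces P Q  ⇒  AltLeft Q (X*P)
        have hdeg : Q.natDegree = P.natDegree + 1 := hInt.1
        have hcnt := (interlaces_iff hrP hrQ hdeg).mp hInt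
        refine Or.inr (Or.inr ⟨hRRQ, hRRXP, Or.inr ?_⟩)
        apply (altLeft_iff hrQ hrXP (by rw [natDegree_XP hP0, hdeg])).mpr
        intro t
        have h1 := (hcnt t).1
        have h2 := (hcnt t).2
        have h3 := cnt_XP hP0 t
        by_cases ht : (0:ℝ) ≤ t
        · have := hfullP t ht
          have := hfullQ t ht
          simp only [if_pos ht] at h3
          omega
        · simp only [if_neg ht] at h3
          omega
      · -- AltLeft P Q  ⇒  Interlaces Q (X*P)
        have hdeg : P.natDegree = Q.natDegree := hAlt.1
        have hcnt := (altLeft_iff hrP hrQ hdeg).mp hAlt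
        refine Or.inr (Or.inr ⟨hRRQ, hRRXP, Or.inl ?_⟩)
        apply (interlaces_iff hrQ hrXP (by rw [natDegree_XP hP0, hdeg])).mpr
        intro t
        have h1 := (hcnt t).1
        have h2 := (hcnt t).2
        have h3 := cnt_XP hP0 t
        by_cases ht : (0:ℝ) ≤ t
        · have := hfullP t ht
          have := hfullQ t ht
          simp only [if_pos ht] at h3
          omega
        · simp only [if_neg ht] at h3
          omega
    · intro hQXP
      rcases eq_or_ne P 0 with hP0 | hP0
      · exact Or.inl hP0
      rcases eq_or_ne Q 0 with hQ0 | hQ0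
      · exact Or.inr (Or.inl hQ0)
      have hrP : rr' P := rr'_of_onlyNonpos hP0 hP'
      have hrQ : rr' Q := rr'_of_onlyNonpos hQ0 hQ'
      have hnpP := nonpos_roots_of_onlyNonpos hP0 hP'
      have hnpQ := nonpos_roots_of_onlyNonpos hQ0 hQ'
      have hrXP : rr' (X * P) := rr'_XP hP0 hrP
      have hRRQ : RealRooted Q := realRooted_of_onlyNonpos hQ'
      have hRRP : RealRooted P := realRooted_of_onlyNonpos hP'
      rcases hQXP with h | h | ⟨-, -, hIA⟩
      · exact absurd h hQ0
      · exact absurd (by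
          rcases mul_eq_zero.mp h with h' | h'
          · exact absurd h' Polynomial.X_ne_zero
          · exact h') hP0
      have hfullP : ∀ t, (0:ℝ) ≤ t → cnt P t = P.natDegree := by
        intro t ht; rw [cnt_full hnpP ht, hrP]
      have hfullQ : ∀ t, (0:ℝ) ≤ t → cnt Q t = Q.natDegree := by
        intro t ht; rw [cnt_full hnpQ ht, hrQ]
      rcases hIA with hInt | hAlt
      · -- Interlaces Q (X*P)  ⇒  AltLeft P Q
        have hdeg : P.natDegree = Q.natDegree := by
          have := hInt.1
          rw [natDegree_XP hP0] at this
          omega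
        have hcnt := (interlaces_iff hrQ hrXP hInt.1).mp hInt
        refine Or.inr (Or.inr ⟨hRRP, hRRQ, Or.inr ?_⟩)
        apply (altLeft_iff hrP hrQ hdeg).mpr
        intro t
        have h1 := (hcnt t).1
        have h2 := (hcnt t).2
        have h3 := cnt_XP hP0 t
        by_cases ht : (0:ℝ) ≤ t
        · have := hfullP t ht
          have := hfullQ t ht
          simp only [if_pos ht] at h3
          omega
        · simp only [if_neg ht] at h3
          omega
      · -- AltLeft Q (X*P)  ⇒  Interlaces P Q
        have hdeg : Q.natDegree = P.natDegree + 1 := by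
          have := hAlt.1
          rw [natDegree_XP hP0] at this
          omega
        have hcnt := (altLeft_iff hrQ hrXP hAlt.1).mp hAlt
        refine Or.inr (Or.inr ⟨hRRP, hRRQ, Or.inl ?_⟩)
        apply (interlaces_iff hrP hrQ hdeg).mpr
        intro t
        have h1 := (hcnt t).1
        have h2 := (hcnt t).2
        have h3 := cnt_XP hP0 t
        by_cases ht : (0:ℝ) ≤ t
        · have := hfullP t ht
          have := hfullQ t ht
          simp only [if_pos ht] at h3
          omega
        · simp only [if_neg ht] at h3
          omega
  · -- part (d)
    intro hPQ
    rcases eq_or_ne P 0 with hP0 | hP0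
    · refine ⟨Or.inl hP0, ?_⟩
      rw [hP0, zero_add]
      exact prec_refl hQ'
    rcases eq_or_ne Q 0 with hQ0 | hQ0
    · refine ⟨?_, Or.inr (Or.inl hQ0)⟩
      rw [hQ0, add_zero]
      exact prec_refl hP'
    have hlcP : 0 < P.leadingCoeff := hP.resolve_left hP0
    have hlcQ : 0 < Q.leadingCoeff := hQ.resolve_left hQ0
    have hrP : rr' P := rr'_of_onlyNonpos hP0 hP'
    have hrQ : rr' Q := rr'_of_onlyNonpos hQ0 hQ'
    have hRRQ : RealRooted Q := realRooted_of_onlyNonpos hQ'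
    have hRRP : RealRooted P := realRooted_of_onlyNonpos hP'
    rcases hPQ with h | h | ⟨-, -, hIA⟩
    · exact absurd h hP0
    · exact absurd h hQ0
    rcases hIA with hInt | hAlt
    · -- Interlaces case : ε = 1
      have hdeg : Q.natDegree = P.natDegree + 1 := hInt.1
      have hcnt := (interlaces_iff hrP hrQ hdeg).mp hInt
      obtain ⟨hRne, hdegR, hrrR, hcntR⟩ :=
        master 1 le_rfl Q.natDegree P Q rfl hP0 hQ0 hlcP hlcQ hrP hrQ (by omega)
          (fun t => by have := hcnt t; omega)
      have hRRR : RealRooted (P + Q) := Or.inr ((rr'_iff_realRooted hRne).mpr hrrR)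
      constructor
      · refine Or.inr (Or.inr ⟨hRRP, hRRR, Or.inl ?_⟩)
        apply (interlaces_iff hrP hrrR (by omega)).mpr
        intro t
        have h1 := hcnt t
        have h2 := hcntR t
        omega
      · refine Or.inr (Or.inr ⟨hRRR, hRRQ, Or.inr ?_⟩)
        apply (altLeft_iff hrrR hrQ (by omega)).mpr
        intro t
        have h1 := hcnt t
        have h2 := hcntR t
        omega
    · -- AltLeft case : ε = 0
      have hdeg : P.natDegree = Q.natDegree := hAlt.1
      have hcnt := (altLeft_iff hrP hrQ hdeg).mp hAlt
      obtain ⟨hRne, hdegR, hrrR, hcntR⟩ :=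
        master 0 (by omega) Q.natDegree P Q rfl hP0 hQ0 hlcP hlcQ hrP hrQ (by omega)
          (fun t => by have := hcnt t; omega)
      have hRRR : RealRooted (P + Q) := Or.inr ((rr'_iff_realRooted hRne).mpr hrrR)
      constructor
      · refine Or.inr (Or.inr ⟨hRRP, hRRR, Or.inr ?_⟩)
        apply (altLeft_iff hrP hrrR (by omega)).mpr
        intro t
        have h1 := hcnt t
        have h2 := hcntR t
        omega
      · refine Or.inr (Or.inr ⟨hRRR, hRRQ, Or.inr ?_⟩)
        apply (altLeft_iff hrrR hrQ (by omega)).mpr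
        intro t
        have h1 := hcnt t
        have h2 := hcntR t
        omega
end

section
/- Define E_c, O_c ∈ ℕ[x] by (u+1)^c = E_c(u²) + u·O_c(u²). Then for all natural numbers a and b: O_{a+b} ≺ E_{a+b}, E_a O_b ≺ E_{a+b}, O_a E_b ≺ E_{a+b}, and O_a O_b ≺ O_{a+b} ≺ E_a E_b. -/
/-!
Substituting `u = i tan φ` in `(u + 1) ^ c = E_c(u²) + u O_c(u²)` and multiplying by `cos^c φ`
gives `cos^c φ · E_c(-tan² φ) = cos (c φ)` and `cos^c φ · tan φ · O_c(-tan² φ) = sin (c φ)`.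
So `E_c` (resp. `O_c`) vanishes at the distinct points `-tan² (j π / 2c)`, `0 < j < c`, `j` odd
(resp. even), and by degree count these are all its zeros. Consequently the number of zeros of
`E_c` above `x` is `⌊m_c / 2⌋` and that of `O_c` is `⌊(m_c - 1) / 2⌋`, where `m_c` counts the
angles `j π / 2c` below `arctan √(-x)`.

Real-rooted `A`, `B` satisfy `A ≺ B` as soon as, for every `x`, `B` has at least as many zeros
above `x` as `A` and at most one more. All five relations reduce to this by the arithmetic of
`m_c = ⌈c t⌉` (with `t = 2 arctan √(-x) / π`): `m_{a+b} ≤ m_a + m_b ≤ m_{a+b} + 1`, with equality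
on the left when `m_a` or `m_b` vanishes.
-/

open Polynomial

open Real

lemma List.getD_le_iff_lt_countP {α : Type*} [LinearOrder α] {l : List α}
    (hl : l.Pairwise (· ≤ ·)) {i : ℕ} (hi : i < l.length) (d x : α) :
    l.getD i d ≤ x ↔ i < l.countP (· ≤ x) := by
  induction l generalizing i with
  | nil => simp at hi
  | cons a t ih =>
    rw [List.pairwise_cons] at hl
    by_cases hax : a ≤ x
    · cases i with
      | zero => simp [hax]
      | succ i =>
        simp only [List.getD_cons_succ, List.countP_cons, hax, decide_true, if_true]
        rw [ih hl.2 (by simpa using hi)]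
        omega
    · have hzero : t.countP (· ≤ x) = 0 :=
        List.countP_eq_zero.2 fun y hy hyx => hax ((hl.1 y hy).trans (by simpa using hyx))
      cases i with
      | zero => simp [hax, hzero]
      | succ i =>
        have hi' : i < t.length := by simpa using hi
        simp only [List.getD_cons_succ, List.countP_cons, hax, hzero, List.getD_eq_getElem _ _ hi']
        exact iff_of_false (fun hle => hax ((hl.1 _ (List.getElem_mem hi')).trans hle)) (by simp)

lemma Nat.ceil_add_eq_or {x y : ℝ} (hx : 0 ≤ x) (hy : 0 ≤ y) :
    ⌈x + y⌉₊ = ⌈x⌉₊ + ⌈y⌉₊ ∨ (⌈x⌉₊ + ⌈y⌉₊ = ⌈x + y⌉₊ + 1 ∧ 0 < ⌈x⌉₊ ∧ 0 < ⌈y⌉₊) := by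
  rcases hx.eq_or_lt with rfl | hx
  · simp
  rcases hy.eq_or_lt with rfl | hy
  · simp
  have hlt : (⌈x⌉₊ + ⌈y⌉₊ : ℝ) < ⌈x + y⌉₊ + 2 := by
    linarith [Nat.ceil_lt_add_one hx.le, Nat.ceil_lt_add_one hy.le, Nat.le_ceil (x + y)]
  have hle := Nat.ceil_add_le x y
  have := Nat.ceil_pos.2 hx
  have := Nat.ceil_pos.2 hy
  have : ⌈x⌉₊ + ⌈y⌉₊ < ⌈x + y⌉₊ + 2 := by exact_mod_cast hlt
  omega

namespace Polynomial

lemma countP_roots_le_add_countP_lt (P : ℝ[X]) (x : ℝ) :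
    P.roots.countP (· ≤ x) + P.roots.countP (x < ·) = P.roots.card := by
  rw [Multiset.card_eq_countP_add_countP (· ≤ x)]
  simp only [not_le]

lemma sroots_getD_le_getD {A B : ℝ[X]} {i j : ℕ} (hi : i < A.roots.card)
    (hj : j < B.roots.card)
    (h : ∀ x, j < B.roots.countP (· ≤ x) → i < A.roots.countP (· ≤ x)) :
    (sroots A).getD i 0 ≤ (sroots B).getD j 0 := by
  have hlen (P : ℝ[X]) : (sroots P).length = P.roots.card := Multiset.length_sort _
  have hcount (P : ℝ[X]) (x : ℝ) : (sroots P).countP (· ≤ x) = P.roots.countP (· ≤ x) := by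
    conv_rhs => rw [← Multiset.sort_eq P.roots (· ≤ ·)]
    rw [Multiset.coe_countP]
    rfl
  have hsorted (P : ℝ[X]) : (sroots P).Pairwise (· ≤ ·) := Multiset.pairwise_sort _ _
  rw [List.getD_le_iff_lt_countP (hsorted A) (by rwa [hlen]), hcount]
  exact h _ (by rw [← hcount, ← List.getD_le_iff_lt_countP (hsorted B) (by rwa [hlen])])

lemma realRooted_of_card_roots {A : ℝ[X]} (hA : A.roots.card = A.natDegree) : RealRooted A := by
  rcases eq_or_ne A 0 with rfl | hA0
  · exact Or.inl rfl
  refine Or.inr fun z hz => ?_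
  have hmap : A.map (algebraMap ℝ ℂ) ≠ 0 :=
    (Polynomial.map_ne_zero_iff (algebraMap ℝ ℂ).injective).2 hA0
  have hz' : z ∈ (A.map (algebraMap ℝ ℂ)).roots := by
    rw [mem_roots hmap, IsRoot, ← eval₂_eq_eval_map, ← aeval_def, hz]
  rw [← roots_map_of_map_ne_zero_of_card_eq_natDegree _ hmap hA] at hz'
  obtain ⟨r, -, rfl⟩ := Multiset.mem_map.1 hz'
  exact Complex.ofReal_im r

theorem prec_of_countP_roots {A B : ℝ[X]} (hA : A.roots.card = A.natDegree)
    (hB : B.roots.card = B.natDegree)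
    (h : ∀ x, A.roots.countP (x < ·) ≤ B.roots.countP (x < ·) ∧
      B.roots.countP (x < ·) ≤ A.roots.countP (x < ·) + 1) :
    Prec A B := by
  refine Or.inr (Or.inr ⟨realRooted_of_card_roots hA, realRooted_of_card_roots hB, ?_⟩)
  have hdeg : A.natDegree ≤ B.natDegree ∧ B.natDegree ≤ A.natDegree + 1 := by
    obtain ⟨x₀, hx₀⟩ : ∃ x₀ : ℝ, ∀ r ∈ A.roots + B.roots, x₀ < r :=
      ((Filter.eventually_all_finset (A.roots + B.roots).toFinset).2
        fun r _ => Filter.eventually_lt_atBot r).exists.imp fun _ h r hr => h r (by simpa using hr)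
    have hall (P : ℝ[X]) (hP : ∀ r ∈ P.roots, x₀ < r) :
        P.roots.countP (x₀ < ·) = P.roots.card :=
      Multiset.countP_eq_card.2 hP
    rw [← hA, ← hB, ← hall A fun r hr => hx₀ r (Multiset.mem_add.2 (.inl hr)),
      ← hall B fun r hr => hx₀ r (Multiset.mem_add.2 (.inr hr))]
    exact h x₀
  have hcount (x : ℝ) := And.intro (h x) <|
    And.intro (countP_roots_le_add_countP_lt A x) (countP_roots_le_add_countP_lt B x)
  rcases (by omega : B.natDegree = A.natDegree + 1 ∨ A.natDegree = B.natDegree) with hd | hd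
  · refine Or.inl ⟨hd, fun i hi => ⟨?_, ?_⟩⟩ <;>
      refine sroots_getD_le_getD (by omega) (by omega) fun x hx => ?_ <;>
      have := hcount x <;> omega
  · refine Or.inr ⟨hd, fun i hi => ?_, fun i hi => ?_⟩ <;>
      refine sroots_getD_le_getD (by omega) (by omega) fun x hx => ?_ <;>
      have := hcount x <;> omega

lemma card_roots_mul_eq_natDegree {A B : ℝ[X]} (hA : A.roots.card = A.natDegree)
    (hB : B.roots.card = B.natDegree) : (A * B).roots.card = (A * B).natDegree := by
  rcases eq_or_ne (A * B) 0 with h0 | h0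
  · simp [h0]
  rw [roots_mul h0, natDegree_mul (left_ne_zero_of_mul h0) (right_ne_zero_of_mul h0),
    Multiset.card_add, hA, hB]

theorem prec_mul_left_of_countP_roots {A B C : ℝ[X]} (hA : A.roots.card = A.natDegree)
    (hB : B.roots.card = B.natDegree) (hC : C.roots.card = C.natDegree)
    (h : ∀ x, A.roots.countP (x < ·) + B.roots.countP (x < ·) ≤ C.roots.countP (x < ·) ∧
      C.roots.countP (x < ·) ≤ A.roots.countP (x < ·) + B.roots.countP (x < ·) + 1) :
    Prec (A * B) C := by
  rcases eq_or_ne (A * B) 0 with h0 | h0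
  · exact Or.inl h0
  refine prec_of_countP_roots (card_roots_mul_eq_natDegree hA hB) hC fun x => ?_
  rw [roots_mul h0, Multiset.countP_add]
  exact h x

theorem prec_mul_right_of_countP_roots {A B C : ℝ[X]} (hA : A.roots.card = A.natDegree)
    (hB : B.roots.card = B.natDegree) (hC : C.roots.card = C.natDegree)
    (h : ∀ x, C.roots.countP (x < ·) ≤ A.roots.countP (x < ·) + B.roots.countP (x < ·) ∧
      A.roots.countP (x < ·) + B.roots.countP (x < ·) ≤ C.roots.countP (x < ·) + 1) :
    Prec C (A * B) := by
  rcases eq_or_ne (A * B) 0 with h0 | h0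
  · exact Or.inr (Or.inl h0)
  refine prec_of_countP_roots hC (card_roots_mul_eq_natDegree hA hB) fun x => ?_
  rw [roots_mul h0, Multiset.countP_add]
  exact h x

lemma roots_eq_of_natDegree_le_card {R : Type*} [CommRing R] [IsDomain R] {P : R[X]}
    {S : Multiset R} (hP : P ≠ 0) (hS : S.Nodup) (hroots : ∀ x ∈ S, P.IsRoot x)
    (hdeg : P.natDegree ≤ S.card) : P.roots = S :=
  (Multiset.eq_of_le_of_card_le ((Multiset.le_iff_subset hS).2 fun x hx => (mem_roots hP).2
    (hroots x hx)) ((card_roots' P).trans hdeg)).symm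

lemma coeff_X_mul_expand_two_mul {R : Type*} [CommSemiring R] (q : R[X]) (k : ℕ) :
    (X * expand R 2 q).coeff (2 * k) = 0 := by
  rcases k with _ | k
  · simp
  · rw [show 2 * (k + 1) = 2 * k + 1 + 1 by ring, coeff_X_mul, coeff_expand two_pos,
      if_neg (by omega)]

end Polynomial

lemma lt_neg_tan_sq_iff {x θ : ℝ} (hθ₀ : 0 ≤ θ) (hθ : θ < π / 2) :
    x < -tan θ ^ 2 ↔ θ < arctan √(-x) := by
  have htan : 0 ≤ tan θ := tan_nonneg_of_nonneg_of_le_pi_div_two hθ₀ hθ.le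
  conv_rhs => rw [← arctan_tan (by linarith [pi_pos]) hθ]
  rw [arctan_strictMono.lt_iff_lt, lt_sqrt htan, lt_neg]

noncomputable def rootAt (c j : ℕ) : ℝ := -tan (j * π / (2 * c)) ^ 2

/-- The number of angles `j * π / (2 * c)`, `j : ℕ`, below `arctan √(-x)`; it is `0` for `0 ≤ x`,
where `√(-x) = 0`. -/
noncomputable def anglesBelow (c : ℕ) (x : ℝ) : ℕ := ⌈2 * c * arctan √(-x) / π⌉₊

lemma angle_mem_Ico {c j : ℕ} (hj : j < c) : j * π / (2 * c) ∈ Set.Ico 0 (π / 2) := by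
  have hc : (0 : ℝ) < c := by exact_mod_cast (Nat.zero_le j).trans_lt hj
  have hjc : (j : ℝ) < c := by exact_mod_cast hj
  constructor
  · positivity
  · rw [div_lt_div_iff₀ (by positivity) two_pos]
    nlinarith [pi_pos]

lemma lt_rootAt_iff {c j : ℕ} (hj : j < c) (x : ℝ) : x < rootAt c j ↔ j < anglesBelow c x := by
  obtain ⟨h₀, h₁⟩ := angle_mem_Ico hj
  have hc : (0 : ℝ) < 2 * c := by exact_mod_cast (by omega : 0 < 2 * c)
  rw [rootAt, lt_neg_tan_sq_iff h₀ h₁, anglesBelow, Nat.lt_ceil, div_lt_iff₀ hc,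
    lt_div_iff₀ pi_pos]
  constructor <;> intro h <;> linarith

lemma anglesBelow_rootAt {c j : ℕ} (hj : j < c) : anglesBelow c (rootAt c j) = j := by
  obtain ⟨h₀, h₁⟩ := angle_mem_Ico hj
  have hc : (0 : ℝ) < c := by exact_mod_cast (Nat.zero_le j).trans_lt hj
  rw [anglesBelow, rootAt, neg_neg, sqrt_sq (tan_nonneg_of_nonneg_of_le_pi_div_two h₀ h₁.le),
    arctan_tan (by linarith [pi_pos]) h₁]
  field_simp
  exact Nat.ceil_natCast j

lemma rootAt_injOn (c : ℕ) : Set.InjOn (rootAt c) (Set.Iio c) := fun i hi j hj hij => by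
  rw [← anglesBelow_rootAt hi, hij, anglesBelow_rootAt hj]

lemma anglesBelow_le (c : ℕ) (x : ℝ) : anglesBelow c x ≤ c := by
  rw [anglesBelow, Nat.ceil_le, div_le_iff₀ pi_pos]
  nlinarith [arctan_lt_pi_div_two √(-x), arctan_nonneg.2 (sqrt_nonneg (-x)),
    (Nat.cast_nonneg c : (0 : ℝ) ≤ c)]

lemma anglesBelow_add (a b : ℕ) (x : ℝ) :
    anglesBelow (a + b) x = anglesBelow a x + anglesBelow b x ∨
      (anglesBelow a x + anglesBelow b x = anglesBelow (a + b) x + 1 ∧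
        0 < anglesBelow a x ∧ 0 < anglesBelow b x) := by
  have hψ := arctan_nonneg.2 (sqrt_nonneg (-x))
  simp only [anglesBelow]
  rw [Nat.cast_add, mul_add, add_mul, add_div]
  exact Nat.ceil_add_eq_or (by positivity) (by positivity)

/-- The points `rootAt c j` for `j = r, r + 2, r + 4, …` below `c`. -/
noncomputable def rootAtFrom (c r : ℕ) : Multiset ℝ :=
  (Multiset.range ((c + 1 - r) / 2)).map fun k => rootAt c (2 * k + r)

lemma card_rootAtFrom (c r : ℕ) : (rootAtFrom c r).card = (c + 1 - r) / 2 := by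
  simp [rootAtFrom]

lemma nodup_rootAtFrom (c r : ℕ) : (rootAtFrom c r).Nodup :=
  (Multiset.nodup_range _).map_on fun i hi j hj hij => by
    simp only [Multiset.mem_range] at hi hj
    have := rootAt_injOn c (by simp; omega) (by simp; omega) hij
    omega

lemma countP_lt_rootAtFrom (c r : ℕ) (x : ℝ) :
    (rootAtFrom c r).countP (x < ·) = (anglesBelow c x + 1 - r) / 2 := by
  have hle := anglesBelow_le c x
  rw [rootAtFrom, Multiset.countP_map, ← Finset.range_val, ← Finset.filter_val, Finset.card_val]
  convert Finset.card_range ((anglesBelow c x + 1 - r) / 2) using 2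
  ext k
  simp only [Finset.mem_filter, Finset.mem_range]
  constructor
  · rintro ⟨hk, hx⟩
    rw [lt_rootAt_iff (by omega)] at hx
    omega
  · intro hk
    exact ⟨by omega, (lt_rootAt_iff (by omega) x).2 (by omega)⟩

section EvenOddParts

variable {Ep Op : ℕ → ℝ[X]}
  (h : ∀ c : ℕ, (X + 1) ^ c = (Ep c).comp (X ^ 2) + X * (Op c).comp (X ^ 2))
include h

lemma coeff_evenPart (c k : ℕ) : (Ep c).coeff k = c.choose (2 * k) := by
  have hc := congrArg (coeff · (2 * k)) (h c)
  simp only [coeff_X_add_one_pow, coeff_add, ← expand_eq_comp_X_pow, coeff_expand_mul' two_pos,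
    coeff_X_mul_expand_two_mul, add_zero] at hc
  exact hc.symm

lemma coeff_oddPart (c k : ℕ) : (Op c).coeff k = c.choose (2 * k + 1) := by
  have hc := congrArg (coeff · (2 * k + 1)) (h c)
  simp only [coeff_X_add_one_pow, coeff_add, ← expand_eq_comp_X_pow, coeff_X_mul,
    coeff_expand_mul' two_pos, coeff_expand two_pos, if_neg (by omega : ¬ 2 ∣ 2 * k + 1),
    zero_add] at hc
  exact hc.symm

lemma natDegree_evenPart_le (c : ℕ) : (Ep c).natDegree ≤ c / 2 :=
  natDegree_le_iff_coeff_eq_zero.2 fun N hN => by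
    rw [coeff_evenPart h, Nat.choose_eq_zero_of_lt (by omega), Nat.cast_zero]

lemma natDegree_oddPart_le (c : ℕ) : (Op c).natDegree ≤ (c - 1) / 2 :=
  natDegree_le_iff_coeff_eq_zero.2 fun N hN => by
    rw [coeff_oddPart h, Nat.choose_eq_zero_of_lt (by omega), Nat.cast_zero]

lemma evenPart_ne_zero (c : ℕ) : Ep c ≠ 0 := fun h0 => by
  simpa [h0] using coeff_evenPart h c 0

lemma oddPart_ne_zero {c : ℕ} (hc : c ≠ 0) : Op c ≠ 0 := fun h0 => by
  simpa [h0, hc, eq_comm (a := (0 : ℝ))] using coeff_oddPart h c 0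

lemma oddPart_zero : Op 0 = 0 :=
  ext fun k => by simp [coeff_oddPart h]

lemma cos_pow_mul_eval_evenPart_oddPart (c : ℕ) {φ : ℝ} (hφ : cos φ ≠ 0) :
    cos φ ^ c * (Ep c).eval (-tan φ ^ 2) = cos (c * φ) ∧
      cos φ ^ c * (tan φ * (Op c).eval (-tan φ ^ 2)) = sin (c * φ) := by
  have hpoly := congrArg (aeval (tan φ * Complex.I)) (h c)
  have hsq : (tan φ * Complex.I) ^ 2 = algebraMap ℝ ℂ (-tan φ ^ 2) := by
    simp [mul_pow]
  simp only [map_add, map_mul, map_pow, aeval_X, map_one, aeval_comp, hsq,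
    aeval_algebraMap_apply_eq_algebraMap_eval] at hpoly
  have hunit : (cos φ : ℂ) * (tan φ * Complex.I + 1) = cos φ + sin φ * Complex.I := by
    rw [mul_add, mul_one, ← mul_assoc, ← Complex.ofReal_mul, tan_eq_sin_div_cos,
      mul_div_cancel₀ _ hφ, add_comm]
  have hdm : ((cos φ : ℂ) + sin φ * Complex.I) ^ c = cos (c * φ) + sin (c * φ) * Complex.I := by
    exact_mod_cast Complex.cos_add_sin_mul_I_pow c φ
  have hparts : ((cos φ ^ c * (Ep c).eval (-tan φ ^ 2) : ℝ) : ℂ) +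
      ((cos φ ^ c * (tan φ * (Op c).eval (-tan φ ^ 2)) : ℝ) : ℂ) * Complex.I =
      (cos (c * φ) : ℂ) + (sin (c * φ) : ℂ) * Complex.I := by
    rw [← hdm, ← hunit, mul_pow, hpoly, Complex.coe_algebraMap]
    push_cast
    ring
  have hre := congrArg Complex.re hparts
  have him := congrArg Complex.im hparts
  simp only [Complex.add_re, Complex.add_im, Complex.mul_I_re, Complex.mul_I_im, Complex.ofReal_re,
    Complex.ofReal_im, neg_zero, add_zero, zero_add] at hre him
  exact ⟨hre, him⟩

lemma roots_evenPart (c : ℕ) : (Ep c).roots = rootAtFrom c 1 := by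
  refine roots_eq_of_natDegree_le_card (evenPart_ne_zero h c) (nodup_rootAtFrom c 1) ?_
    (by simpa [card_rootAtFrom] using natDegree_evenPart_le h c)
  simp only [rootAtFrom, Multiset.mem_map, Multiset.mem_range, forall_exists_index, and_imp]
  rintro _ k hk rfl
  obtain ⟨h₀, h₁⟩ := angle_mem_Ico (by omega : 2 * k + 1 < c)
  have hcos := (cos_pos_of_mem_Ioo ⟨by linarith [pi_pos], h₁⟩).ne'
  have hc : (c : ℝ) ≠ 0 := by exact_mod_cast (by omega : c ≠ 0)
  have hzero := (cos_pow_mul_eval_evenPart_oddPart h c hcos).1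
  have hcos_mul : cos (c * (((2 * k + 1 : ℕ) : ℝ) * π / (2 * c))) = 0 :=
    cos_eq_zero_iff.2 ⟨k, by field_simp; push_cast; ring⟩
  rw [hcos_mul] at hzero
  exact (mul_eq_zero.1 hzero).resolve_left (pow_ne_zero _ hcos)

lemma roots_oddPart (c : ℕ) : (Op c).roots = rootAtFrom c 2 := by
  rcases eq_or_ne c 0 with rfl | hc0
  · simp [oddPart_zero h, rootAtFrom]
  refine roots_eq_of_natDegree_le_card (oddPart_ne_zero h hc0) (nodup_rootAtFrom c 2) ?_
    ((natDegree_oddPart_le h c).trans (by rw [card_rootAtFrom]; omega))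
  simp only [rootAtFrom, Multiset.mem_map, Multiset.mem_range, forall_exists_index, and_imp]
  rintro _ k hk rfl
  obtain ⟨h₀, h₁⟩ := angle_mem_Ico (by omega : 2 * k + 2 < c)
  have hc : (c : ℝ) ≠ 0 := by exact_mod_cast hc0
  have hpos : 0 < ((2 * k + 2 : ℕ) : ℝ) * π / (2 * c) := by positivity
  have hcos := (cos_pos_of_mem_Ioo ⟨by linarith [pi_pos], h₁⟩).ne'
  have hzero := (cos_pow_mul_eval_evenPart_oddPart h c hcos).2
  rw [show (c : ℝ) * (((2 * k + 2 : ℕ) : ℝ) * π / (2 * c)) = ((k + 1 : ℕ) : ℝ) * π by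
    field_simp; push_cast; ring, sin_nat_mul_pi] at hzero
  exact ((mul_eq_zero.1 ((mul_eq_zero.1 hzero).resolve_left (pow_ne_zero _ hcos))).resolve_left
    (tan_pos_of_pos_of_lt_pi_div_two hpos h₁).ne')

lemma card_roots_evenPart (c : ℕ) : (Ep c).roots.card = (Ep c).natDegree :=
  le_antisymm (card_roots' _) ((natDegree_evenPart_le h c).trans
    (by rw [roots_evenPart h, card_rootAtFrom]; omega))

lemma card_roots_oddPart (c : ℕ) : (Op c).roots.card = (Op c).natDegree :=
  le_antisymm (card_roots' _) ((natDegree_oddPart_le h c).trans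
    (by rw [roots_oddPart h, card_rootAtFrom]; omega))

lemma countP_lt_roots_evenPart (c : ℕ) (x : ℝ) :
    (Ep c).roots.countP (x < ·) = anglesBelow c x / 2 := by
  rw [roots_evenPart h, countP_lt_rootAtFrom, Nat.add_sub_cancel]

lemma countP_lt_roots_oddPart (c : ℕ) (x : ℝ) :
    (Op c).roots.countP (x < ·) = (anglesBelow c x - 1) / 2 := by
  rw [roots_oddPart h, countP_lt_rootAtFrom]
  omega

end EvenOddParts

/-- Lemma 3.1: with `E_c, O_c` the even and odd parts of `(u+1)^c`, for all naturals `a, b`: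
`O_{a+b} ≺ E_{a+b}`, `E_a O_b ≺ E_{a+b}`, `O_a E_b ≺ E_{a+b}`, and
`O_a O_b ≺ O_{a+b} ≺ E_a E_b`. -/
theorem stmt11 (Ep Op : ℕ → Polynomial ℝ)
    (h : ∀ c : ℕ, (X + 1) ^ c = (Ep c).comp (X ^ 2) + X * (Op c).comp (X ^ 2))
    (a b : ℕ) :
    Prec (Op (a + b)) (Ep (a + b)) ∧
    Prec (Ep a * Op b) (Ep (a + b)) ∧
    Prec (Op a * Ep b) (Ep (a + b)) ∧
    Prec (Op a * Op b) (Op (a + b)) ∧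
    Prec (Op (a + b)) (Ep a * Ep b) := by
  have hE := card_roots_evenPart h
  have hO := card_roots_oddPart h
  refine ⟨prec_of_countP_roots (hO _) (hE _) fun x => ?_,
    prec_mul_left_of_countP_roots (hE a) (hO b) (hE _) fun x => ?_,
    prec_mul_left_of_countP_roots (hO a) (hE b) (hE _) fun x => ?_,
    prec_mul_left_of_countP_roots (hO a) (hO b) (hO _) fun x => ?_,
    prec_mul_right_of_countP_roots (hE a) (hE b) (hO _) fun x => ?_⟩ <;>
  simp only [countP_lt_roots_evenPart h, countP_lt_roots_oddPart h] <;>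
  rcases anglesBelow_add a b x with hx | hx <;> omega
end

section
/- Let A, B, P, Q, S, T be real polynomials with A ≢ 0 or B ≢ 0. If (A, B, P, Q) and (A, B, S, T) are interpolatory squares (i.e., for all λ, ρ > 0: λA + ρB ≺ λP + ρQ, λB + ρxA ≺ λQ + ρxP, and likewise with S, T replacing P, Q), then (A, B, P+S, Q+T) is an interpolatory square. -/
open Polynomial

/-- `(A, B, P, Q)` is an interpolatory square: for all `λ, ρ > 0`,
`λA + ρB ≺ λP + ρQ` and `λB + ρxA ≺ λQ + ρxP`. -/
def InterpSquare (A B P Q : Polynomial ℝ) : Prop :=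
  ∀ l r : ℝ, 0 < l → 0 < r →
    Prec (C l * A + C r * B) (C l * P + C r * Q) ∧
      Prec (C l * B + C r * (X * A)) (C l * Q + C r * (X * P))

/-!
Write `N_P(x)` (`countLe P.roots x`) for the number of roots of `P` in `(-∞, x]`. For polynomials
with only real roots, `F ≺ G` says exactly that `deg G = deg F + e` and `N_G ≤ N_F + e ≤ N_G + 1`
for some `e ∈ {0, 1}`. Such a `G` has every repeated root of `F`, with multiplicity at least one
less; after dividing these out, the condition becomes a sign pattern: at the `c`-th of the `k`
distinct roots of `F` the quotient is zero or has the sign of `(-1) ^ (k + c + 1)`. Sign patterns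
add up under sums of polynomials with positive leading coefficients. Conversely, a sign pattern
that alternates along `k + e + 1` points (the roots of `F` together with points near `±∞`) forces,
by the intermediate value theorem and a parity count of roots, `k + e` real roots placed exactly
as `≺` requires. Hence `F ≺ G` and `F ≺ H` give `F ≺ G + H`, which is applied to both relations
defining an interpolatory square.
-/

namespace Interlacing

open Multiset Filter Topology

noncomputable def countLe (s : Multiset ℝ) (x : ℝ) : ℕ := card (s.filter (· ≤ x))

theorem countLe_add (s t : Multiset ℝ) (x : ℝ) :
    countLe (s + t) x = countLe s x + countLe t x := by
  simp [countLe, filter_add]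

theorem countLe_le_card (s : Multiset ℝ) (x : ℝ) : countLe s x ≤ card s :=
  card_le_card (filter_le _ s)

theorem countLe_mono (s : Multiset ℝ) {x y : ℝ} (hxy : x ≤ y) : countLe s x ≤ countLe s y :=
  card_le_card (monotone_filter_right s fun _ hr => hr.trans hxy)

theorem countLe_lt_countLe_of_mem {s : Multiset ℝ} {y t : ℝ} (hyt : y < t) (ht : t ∈ s) :
    countLe s y < countLe s t := by
  refine card_lt_card (lt_of_le_of_ne (monotone_filter_right s fun _ hr => hr.trans hyt.le) ?_)
  intro h
  have ht' : t ∈ s.filter (· ≤ y) := h ▸ mem_filter.2 ⟨ht, le_rfl⟩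
  exact hyt.not_ge (mem_filter.1 ht').2

theorem exists_lt_forall_le_of_lt (s : Multiset ℝ) (t : ℝ) :
    ∃ y < t, ∀ r ∈ s, r < t → r ≤ y := by
  have h : ∀ᶠ y in 𝓝[<] t, y < t ∧ ∀ r ∈ s.toFinset, r < t → r ≤ y := by
    refine eventually_mem_nhdsWithin.and ((eventually_all_finset _).2 fun r _ => ?_)
    by_cases hr : r < t
    · exact ((eventually_gt_nhds hr).filter_mono nhdsWithin_le_nhds).mono fun _ hy _ => hy.le
    · exact Eventually.of_forall fun _ h => absurd h hr
  obtain ⟨y, hyt, hy⟩ := h.exists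
  exact ⟨y, hyt, fun r hr => hy r (mem_toFinset.2 hr)⟩

theorem countLe_eq_countLe_add_count {s : Multiset ℝ} {y t : ℝ} (hyt : y < t)
    (hgap : ∀ r ∈ s, r < t → r ≤ y) : countLe s t = countLe s y + s.count t := by
  have hand : s.filter (fun r => r ≤ y ∧ t = r) = 0 :=
    filter_eq_nil.2 fun r _ h => hyt.not_ge (h.2 ▸ h.1)
  have hor : s.filter (fun r => r ≤ y ∨ t = r) = s.filter (· ≤ t) := by
    refine filter_congr fun r hr => ⟨?_, fun hrt => ?_⟩
    · rintro (h | rfl)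
      · exact h.trans hyt.le
      · exact le_rfl
    · rcases hrt.lt_or_eq with h | h
      · exact .inl (hgap r hr h)
      · exact .inr h.symm
  rw [count_eq_card_filter_eq, countLe, countLe, ← card_add, filter_add_filter, hand, hor,
    add_zero]

theorem getD_le_iff_lt_length_filter {l : List ℝ} (hl : l.Pairwise (· ≤ ·)) {i : ℕ}
    (hi : i < l.length) (x : ℝ) : l.getD i 0 ≤ x ↔ i < (l.filter (· ≤ x)).length := by
  induction l generalizing i with
  | nil => simp at hi
  | cons a l ih =>
    obtain ⟨ha, hl⟩ := List.pairwise_cons.1 hl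
    by_cases hax : a ≤ x
    · cases i with
      | zero => simp [hax]
      | succ j => simpa [hax] using ih hl (by simpa using hi)
    · have hnil : l.filter (· ≤ x) = [] :=
        List.filter_eq_nil_iff.2 fun b hb hbx => hax ((ha b hb).trans (by simpa using hbx))
      have hget : ¬ (a :: l).getD i 0 ≤ x := by
        cases i with
        | zero => simpa using hax
        | succ j =>
          have hj : j < l.length := by simpa using hi
          rw [List.getD_cons_succ, List.getD_eq_getElem _ _ hj]
          exact fun h => hax ((ha _ (List.getElem_mem hj)).trans h)
      rw [List.filter_cons_of_neg (by simpa using hax), hnil]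
      simpa using hget

theorem sort_getD_le_iff {s : Multiset ℝ} {i : ℕ} (hi : i < card s) (x : ℝ) :
    (s.sort (· ≤ ·)).getD i 0 ≤ x ↔ i < countLe s x := by
  rw [getD_le_iff_lt_length_filter (pairwise_sort s _) (by simpa using hi)]
  conv_rhs => rw [countLe, ← sort_eq s (· ≤ ·), filter_coe, coe_card]

theorem forall_sort_getD_le_iff {s t : Multiset ℝ} {d : ℕ} (hst : card t ≤ card s + d) :
    (∀ i, i + d < card t → (s.sort (· ≤ ·)).getD i 0 ≤ (t.sort (· ≤ ·)).getD (i + d) 0) ↔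
      ∀ x, countLe t x ≤ countLe s x + d := by
  constructor
  · intro h x
    by_contra! hx
    have hlt : countLe s x + d < card t := hx.trans_le (countLe_le_card t x)
    have ht := (sort_getD_le_iff hlt x).2 (by omega)
    have := (sort_getD_le_iff (by omega) x).1 ((h _ hlt).trans ht)
    omega
  · intro h i hi
    have := (sort_getD_le_iff hi _).1 le_rfl
    exact (sort_getD_le_iff (by omega) _).2 (by have := h ((t.sort (· ≤ ·)).getD (i + d) 0); omega)

/-- The counting form of `≺`: `e = 1` encodes interlacing, `e = 0` left alternation. -/
def CountInterlace (e : ℕ) (s t : Multiset ℝ) : Prop :=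
  ∀ x, countLe t x ≤ countLe s x + e ∧ countLe s x + e ≤ countLe t x + 1

theorem interlaces_iff {F G : ℝ[X]} (hF : card F.roots = F.natDegree)
    (hG : card G.roots = G.natDegree) :
    Interlaces F G ↔ G.natDegree = F.natDegree + 1 ∧ CountInterlace 1 F.roots G.roots := by
  refine and_congr_right fun hdeg => ?_
  have h₁ := forall_sort_getD_le_iff (s := G.roots) (t := F.roots) (d := 0) (by omega)
  have h₂ := forall_sort_getD_le_iff (s := F.roots) (t := G.roots) (d := 1) (by omega)
  simp only [add_zero, hF, hG, hdeg, add_lt_add_iff_right] at h₁ h₂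
  simp only [CountInterlace, sroots, imp_and, forall_and, h₁, h₂, add_le_add_iff_right]
  exact and_comm

theorem altLeft_iff {F G : ℝ[X]} (hF : card F.roots = F.natDegree)
    (hG : card G.roots = G.natDegree) :
    AltLeft F G ↔ G.natDegree = F.natDegree + 0 ∧ CountInterlace 0 F.roots G.roots := by
  rw [add_zero, eq_comm]
  refine and_congr_right fun hdeg => ?_
  have h₁ := forall_sort_getD_le_iff (s := F.roots) (t := G.roots) (d := 0) (by omega)
  have h₂ := forall_sort_getD_le_iff (s := G.roots) (t := F.roots) (d := 1) (by omega)
  simp only [add_zero, hF, hG, ← hdeg] at h₁ h₂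
  simp only [CountInterlace, sroots, forall_and, h₁, h₂, add_zero]

theorem interlaces_or_altLeft_iff {F G : ℝ[X]} (hF : card F.roots = F.natDegree)
    (hG : card G.roots = G.natDegree) :
    Interlaces F G ∨ AltLeft F G ↔
      ∃ e ≤ 1, G.natDegree = F.natDegree + e ∧ CountInterlace e F.roots G.roots := by
  rw [interlaces_iff hF hG, altLeft_iff hF hG]
  constructor
  · rintro (h | h)
    exacts [⟨1, le_rfl, h⟩, ⟨0, zero_le_one, h⟩]
  · rintro ⟨e, he, h⟩
    interval_cases e
    exacts [.inr h, .inl h]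

theorem countInterlace_add_left_iff {e : ℕ} (m s t : Multiset ℝ) :
    CountInterlace e (m + s) (m + t) ↔ CountInterlace e s t := by
  simp only [CountInterlace, countLe_add]
  exact forall_congr' fun x => by constructor <;> intro h <;> omega

theorem sub_dedup_le_of_countInterlace {e : ℕ} {s t : Multiset ℝ} (h : CountInterlace e s t) :
    s - s.dedup ≤ t := by
  refine le_iff_count.2 fun r => ?_
  obtain ⟨y, hyr, hgap⟩ := exists_lt_forall_le_of_lt (s + t) r
  have hs := countLe_eq_countLe_add_count hyr fun a ha => hgap a (mem_add.2 (.inl ha))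
  have ht := countLe_eq_countLe_add_count hyr fun a ha => hgap a (mem_add.2 (.inr ha))
  have := (h r).2
  have := (h y).1
  rw [count_sub, count_dedup]
  split_ifs with hr
  · omega
  · simp [count_eq_zero.2 hr]

theorem realRooted_iff_card_roots {A : ℝ[X]} : RealRooted A ↔ card A.roots = A.natDegree := by
  have hinj : Function.Injective (algebraMap ℝ ℂ) := (algebraMap ℝ ℂ).injective
  rcases eq_or_ne A 0 with rfl | hA
  · simp [RealRooted]
  have hA' : A.map (algebraMap ℝ ℂ) ≠ 0 := (Polynomial.map_ne_zero_iff hinj).2 hA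
  simp only [RealRooted, hA, false_or]
  constructor
  · intro h
    classical
    have hall : (A.map (algebraMap ℝ ℂ)).roots.filter (· ∈ (algebraMap ℝ ℂ).range) =
        (A.map (algebraMap ℝ ℂ)).roots := by
      refine filter_eq_self.2 fun z hz => ⟨z.re, Complex.ext (by simp) ?_⟩
      refine (h z ?_).symm ▸ rfl
      rwa [aeval_def, eval₂_eq_eval_map, ← IsRoot, ← mem_roots hA']
    rw [← card_map (algebraMap ℝ ℂ), ← filter_roots_map_range_eq_map_roots hinj, hall,
      IsAlgClosed.card_roots_eq_natDegree, natDegree_map]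
  · intro h z hz
    rw [aeval_def, eval₂_eq_eval_map, ← IsRoot, ← mem_roots hA',
      ← roots_map_of_injective_of_card_eq_natDegree hinj h] at hz
    obtain ⟨r, -, rfl⟩ := mem_map.1 hz
    simp

theorem neg_one_pow_mul_prod_sub_pos {s : Multiset ℝ} {x : ℝ} (hx : x ∉ s) :
    0 < (-1 : ℝ) ^ (card s + countLe s x) * (s.map (x - ·)).prod := by
  induction s using Multiset.induction_on with
  | empty => simp [countLe]
  | cons a s ih =>
    have hxa : x ≠ a := fun h => hx (h ▸ mem_cons_self a s)
    have ih := ih fun h => hx (mem_cons_of_mem h)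
    by_cases hax : a ≤ x
    · have hcount : countLe (a ::ₘ s) x = countLe s x + 1 := by simp [countLe, hax]
      rw [card_cons, hcount, map_cons, prod_cons]
      exact (mul_pos (sub_pos.2 (hax.lt_of_ne hxa.symm)) ih).trans_eq (by ring)
    · have hcount : countLe (a ::ₘ s) x = countLe s x := by simp [countLe, hax]
      rw [card_cons, hcount, map_cons, prod_cons]
      exact (mul_pos (sub_pos.2 (not_le.1 hax)) ih).trans_eq (by ring)

theorem neg_one_pow_mul_eval_pos {p : ℝ[X]} (hroots : card p.roots = p.natDegree)
    (hlc : 0 < p.leadingCoeff) {x : ℝ} (hx : ¬ p.IsRoot x) :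
    0 < (-1 : ℝ) ^ (p.natDegree + countLe p.roots x) * p.eval x := by
  have hp : p ≠ 0 := leadingCoeff_ne_zero.1 hlc.ne'
  have heval : p.eval x = p.leadingCoeff * (p.roots.map (x - ·)).prod := by
    conv_lhs => rw [← C_leadingCoeff_mul_prod_multiset_X_sub_C hroots]
    simp [eval_multiset_prod]
  rw [heval, mul_left_comm, ← hroots]
  exact mul_pos hlc (neg_one_pow_mul_prod_sub_pos fun h => hx ((mem_roots hp).1 h))

theorem eval_mul_eval_pos_of_roots_eq_zero {q : ℝ[X]} (hq : q ≠ 0) (hroots : q.roots = 0)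
    (x y : ℝ) : 0 < q.eval x * q.eval y := by
  have hne : ∀ z, q.eval z ≠ 0 := fun z hz => by
    simpa [hroots] using (mem_roots hq).2 hz
  by_contra! h
  obtain ⟨z, hz⟩ : (0 : ℝ) ∈ Set.range (q.eval ·) := by
    rcases le_or_gt (q.eval x) 0 with hx | hx
    · exact mem_range_of_exists_le_of_exists_ge q.continuous ⟨x, hx⟩
        ⟨y, by nlinarith [lt_of_le_of_ne hx (hne x)]⟩
    · exact mem_range_of_exists_le_of_exists_ge q.continuous ⟨y, by nlinarith⟩ ⟨x, hx.le⟩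
  exact hne z hz

theorem neg_one_pow_mul_eval_mul_eval_pos {u : ℝ[X]} (hu : u ≠ 0) {x y : ℝ}
    (hx : ¬ u.IsRoot x) (hy : ¬ u.IsRoot y) :
    0 < (-1 : ℝ) ^ (countLe u.roots x + countLe u.roots y) * (u.eval x * u.eval y) := by
  obtain ⟨q, hq, -, hq0⟩ := exists_prod_multiset_X_sub_C_mul u
  have hq' : q ≠ 0 := by rintro rfl; exact hu (by simpa using hq.symm)
  have heval : ∀ z, u.eval z = (u.roots.map (z - ·)).prod * q.eval z := fun z => by
    conv_lhs => rw [← hq]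
    simp [eval_multiset_prod]
  have hmem : ∀ {z}, ¬ u.IsRoot z → z ∉ u.roots := fun hz h => hz ((mem_roots hu).1 h)
  have hsq : ((-1 : ℝ) ^ card u.roots) ^ 2 = 1 := by rw [← pow_mul, pow_mul']; simp
  have := mul_pos (mul_pos (neg_one_pow_mul_prod_sub_pos (hmem hx))
    (neg_one_pow_mul_prod_sub_pos (hmem hy))) (eval_mul_eval_pos_of_roots_eq_zero hq' hq0 x y)
  rw [heval, heval]
  refine this.trans_eq ?_
  linear_combination ((u.roots.map (x - ·)).prod * (u.roots.map (y - ·)).prod * q.eval x *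
    q.eval y * (-1) ^ countLe u.roots x * (-1) ^ countLe u.roots y) * hsq

theorem even_add_of_neg_one_pow_mul_pos {a b : ℕ} {z : ℝ} (ha : 0 < (-1 : ℝ) ^ a * z)
    (hb : 0 < (-1 : ℝ) ^ b * z) : Even (a + b) := by
  by_contra h
  have hab := mul_pos ha hb
  rw [show (-1 : ℝ) ^ a * z * ((-1) ^ b * z) = (-1) ^ (a + b) * z ^ 2 by ring,
    (Nat.not_even_iff_odd.1 h).neg_one_pow] at hab
  nlinarith [sq_nonneg z]

theorem eventually_atTop_eval_pos {p : ℝ[X]} (hlc : 0 < p.leadingCoeff) :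
    ∀ᶠ x in atTop, 0 < p.eval x :=
  p.isEquivalent_atTop_lead.eventually_pos
    ((eventually_gt_atTop 0).mono fun x hx => by positivity)

theorem eventually_atBot_neg_one_pow_mul_eval_pos {p : ℝ[X]} (hlc : 0 < p.leadingCoeff) :
    ∀ᶠ x in atBot, 0 < (-1 : ℝ) ^ p.natDegree * p.eval x := by
  refine ((Asymptotics.IsEquivalent.refl (u := fun _ => (-1 : ℝ) ^ p.natDegree)).mul
    p.isEquivalent_atBot_lead).eventually_pos ((eventually_lt_atBot 0).mono fun x hx => ?_)
  have : 0 < (-x) ^ p.natDegree := pow_pos (neg_pos.2 hx) _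
  simp only [Pi.mul_apply]
  rw [neg_pow] at this
  nlinarith

section Alternation

variable {u : ℝ[X]} {s : ℕ → ℝ} {m : ℕ} {σ : ℝ}

theorem le_countLe_of_alternating_of_ne_zero (hu : u ≠ 0) (hs : ∀ t < m, s t < s (t + 1))
    (hσ : σ ≠ 0) (hsign : ∀ t ≤ m, 0 ≤ σ * (-1) ^ t * u.eval (s t)) {i : ℕ}
    (hi : ¬ u.IsRoot (s i)) {j : ℕ} (hij : i ≤ j) (hjm : j ≤ m) :
    j - i + countLe u.roots (s i) ≤ countLe u.roots (s j) := by
  induction j, hij using Nat.le_induction with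
  | base => simp
  | succ j hij ih =>
    have ih := ih (by omega)
    have hmono := countLe_mono u.roots (hs j (by omega)).le
    by_cases hj : u.IsRoot (s (j + 1))
    · have := countLe_lt_countLe_of_mem (hs j (by omega)) ((mem_roots hu).2 hj)
      omega
    · have hpos : ∀ t ≤ m, ¬ u.IsRoot (s t) → 0 < σ * (-1) ^ t * u.eval (s t) := fun t ht hz =>
        (hsign t ht).lt_of_ne (mul_ne_zero (mul_ne_zero hσ (by simp)) hz).symm
      have hprod : 0 < (-1) ^ (i + (j + 1)) * (u.eval (s i) * u.eval (s (j + 1))) := by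
        have := mul_pos (hpos i (by omega) hi) (hpos (j + 1) hjm hj)
        rw [show σ * (-1) ^ i * u.eval (s i) * (σ * (-1) ^ (j + 1) * u.eval (s (j + 1))) =
          σ ^ 2 * ((-1) ^ (i + (j + 1)) * (u.eval (s i) * u.eval (s (j + 1)))) by ring] at this
        exact pos_of_mul_pos_right this (sq_nonneg σ)
      -- the number of roots in `(s i, s (j + 1)]` has the parity of `j + 1 - i`
      have := Nat.even_iff.1 (even_add_of_neg_one_pow_mul_pos hprod
        (neg_one_pow_mul_eval_mul_eval_pos hu hi hj))
      omega

theorem le_countLe_of_alternating (hu : u ≠ 0) (hs : ∀ t < m, s t < s (t + 1)) (hσ : σ ≠ 0)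
    (hsign : ∀ t ≤ m, 0 ≤ σ * (-1) ^ t * u.eval (s t)) {i j : ℕ} (hij : i ≤ j) (hjm : j ≤ m)
    {y : ℝ} (hy : y < s i) : j - i + countLe u.roots y ≤ countLe u.roots (s j) := by
  obtain ⟨k, rfl⟩ := Nat.exists_eq_add_of_le hij
  clear hij
  induction k generalizing i y with
  | zero => simpa using countLe_mono u.roots hy.le
  | succ k ih =>
    by_cases hi : u.IsRoot (s i)
    · have hlt := countLe_lt_countLe_of_mem hy ((mem_roots hu).2 hi)
      have := ih (i := i + 1) (hs i (by omega)) (by omega)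
      rw [show i + (k + 1) = i + 1 + k by omega]
      omega
    · have := le_countLe_of_alternating_of_ne_zero hu hs hσ hsign hi (Nat.le_add_right _ _) hjm
      have := countLe_mono u.roots hy.le
      omega

end Alternation

section SortedNodup

variable {D : Multiset ℝ}

theorem sort_getD_mem {j : ℕ} (hj : j < card D) : (D.sort (· ≤ ·)).getD j 0 ∈ D := by
  rw [List.getD_eq_getElem _ _ (by simpa using hj), ← mem_sort (· ≤ ·)]
  exact List.getElem_mem _

theorem sort_getD_lt_sort_getD (hD : D.Nodup) {i j : ℕ} (hij : i < j) (hj : j < card D) :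
    (D.sort (· ≤ ·)).getD i 0 < (D.sort (· ≤ ·)).getD j 0 := by
  have hsorted : (D.sort (· ≤ ·)).SortedLT :=
    (pairwise_sort D _).sortedLE.sortedLT_of_nodup (by rwa [← coe_nodup, sort_eq])
  have hlen : j < (D.sort (· ≤ ·)).length := by simpa using hj
  rw [List.getD_eq_getElem _ _ (hij.trans hlen), List.getD_eq_getElem _ _ hlen]
  exact hsorted.getElem_lt_getElem_of_lt hij

theorem countLe_sort_getD (hD : D.Nodup) {j : ℕ} (hj : j < card D) :
    countLe D ((D.sort (· ≤ ·)).getD j 0) = j + 1 := by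
  have hge := (sort_getD_le_iff hj _).1 le_rfl
  by_contra hne
  have hlt : j + 1 < card D :=
    (show j + 1 < countLe D ((D.sort (· ≤ ·)).getD j 0) by omega).trans_le (countLe_le_card D _)
  exact (sort_getD_lt_sort_getD hD (Nat.lt_succ_self j) hlt).not_ge
    ((sort_getD_le_iff hlt _).2 (by omega))

end SortedNodup

theorem sign_eval_of_countInterlace {D : Multiset ℝ} {g : ℝ[X]} {e : ℕ}
    (hroots : card g.roots = g.natDegree) (hlc : 0 < g.leadingCoeff)
    (hdeg : g.natDegree = card D + e) (h : CountInterlace e D g.roots) {t : ℝ} (ht : t ∈ D) :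
    0 ≤ (-1 : ℝ) ^ (card D + countLe D t + 1) * g.eval t := by
  by_cases hz : g.IsRoot t
  · simp [hz.eq_zero]
  obtain ⟨y, hyt, hgap⟩ := exists_lt_forall_le_of_lt g.roots t
  have hg := countLe_eq_countLe_add_count hyt hgap
  rw [count_eq_zero.2 fun hmem => hz ((mem_roots (leadingCoeff_ne_zero.1 hlc.ne')).1 hmem),
    add_zero] at hg
  have hD := countLe_lt_countLe_of_mem hyt ht
  have := (h y).1
  have := (h t).2
  rw [neg_one_pow_congr (n := g.natDegree + countLe g.roots t) (by
    simp only [Nat.even_iff]; omega)]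
  exact (neg_one_pow_mul_eval_pos hroots hlc hz).le

theorem exists_alternating_points {D : Multiset ℝ} (hD : D.Nodup) {u : ℝ[X]} {e : ℕ}
    (he : e ≤ 1) (hlc : 0 < u.leadingCoeff) (hdeg : u.natDegree = card D + e)
    (hsign : ∀ t ∈ D, 0 ≤ (-1 : ℝ) ^ (card D + countLe D t + 1) * u.eval t) :
    ∃ s : ℕ → ℝ, (∀ i < u.natDegree, s i < s (i + 1)) ∧
      (∀ i ≤ u.natDegree, 0 ≤ (-1) ^ u.natDegree * (-1) ^ i * u.eval (s i)) ∧
      ∀ j < card D, s (j + e) = (D.sort (· ≤ ·)).getD j 0 := by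
  set k := card D
  set T : ℕ → ℝ := fun j => (D.sort (· ≤ ·)).getD j 0
  -- `x₀` and `x₁` carry the signs of `u` near `+∞` and `-∞`; `x₁` is used only when `e = 1`
  obtain ⟨x₀, hx₀, hDx₀⟩ := ((eventually_atTop_eval_pos hlc).and
    ((eventually_all_finset D.toFinset).2 fun t _ => eventually_gt_atTop t)).exists
  obtain ⟨x₁, ⟨hx₁, hDx₁⟩, hx₁₀⟩ := (((eventually_atBot_neg_one_pow_mul_eval_pos hlc).and
    ((eventually_all_finset D.toFinset).2 fun t _ => eventually_lt_atBot t)).and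
    (eventually_lt_atBot x₀)).exists
  have hTx₀ : ∀ j < k, T j < x₀ := fun j hj => hDx₀ _ (mem_toFinset.2 (sort_getD_mem hj))
  have hx₁T : ∀ j < k, x₁ < T j := fun j hj => hDx₁ _ (mem_toFinset.2 (sort_getD_mem hj))
  refine ⟨fun i => if i < e then x₁ else if i < k + e then T (i - e) else x₀, ?_, ?_, ?_⟩
  · intro i hi
    rw [hdeg] at hi
    dsimp only
    split_ifs <;> first
      | omega | exact hx₁₀ | exact hx₁T _ (by omega) | exact hTx₀ _ (by omega)
      | exact sort_getD_lt_sort_getD hD (by omega) (by omega)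
  · intro i hi
    dsimp only
    split_ifs with h₁ h₂
    · obtain rfl : i = 0 := by omega
      simpa using hx₁.le
    · have hj : i - e < k := by omega
      have := hsign _ (sort_getD_mem hj)
      rw [countLe_sort_getD hD hj] at this
      rwa [← pow_add, neg_one_pow_congr (n := k + (i - e + 1) + 1) (by
        simp only [Nat.even_iff]; omega)]
    · obtain rfl : i = u.natDegree := by omega
      rw [← pow_add, Even.neg_one_pow ⟨_, rfl⟩, one_mul]
      exact hx₀.le
  · intro j hj
    simp [show ¬ j + e < e by omega, show j + e < k + e by omega, T]

theorem countInterlace_of_alternating_points {D : Multiset ℝ} {u : ℝ[X]} {e : ℕ}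
    (he : e ≤ 1) (hu : u ≠ 0) (hdeg : u.natDegree = card D + e) {s : ℕ → ℝ}
    (hs : ∀ i < u.natDegree, s i < s (i + 1))
    (hsign : ∀ i ≤ u.natDegree, 0 ≤ (-1) ^ u.natDegree * (-1) ^ i * u.eval (s i))
    (hsD : ∀ j < card D, s (j + e) = (D.sort (· ≤ ·)).getD j 0) :
    card u.roots = u.natDegree ∧ CountInterlace e D u.roots := by
  have key := @le_countLe_of_alternating _ _ _ _ hu hs (by simp) hsign
  have hlast := countLe_le_card u.roots (s u.natDegree)
  have hcard : card u.roots = u.natDegree := le_antisymm (card_roots' u) (by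
    have := key (Nat.zero_le _) le_rfl (y := s 0 - 1) (by linarith)
    omega)
  refine ⟨hcard, fun x => ⟨?_, ?_⟩⟩
  · by_cases hc : countLe D x < card D
    · have hx : x < s (countLe D x + e) := by
        rw [hsD _ hc]
        exact lt_of_not_ge (mt (sort_getD_le_iff hc x).1 (lt_irrefl _))
      have := key (by omega) le_rfl hx
      omega
    · have := countLe_le_card u.roots x
      omega
  · rcases Nat.eq_zero_or_pos (countLe D x) with hc | hc
    · omega
    have hcD : countLe D x - 1 < card D := by have := countLe_le_card D x; omega
    have hx : s (countLe D x - 1 + e) ≤ x := by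
      rw [hsD _ hcD]
      exact (sort_getD_le_iff hcD x).2 (by omega)
    have := key (j := countLe D x - 1 + e) (Nat.zero_le _) (by omega) (y := s 0 - 1) (by linarith)
    have := countLe_mono u.roots hx
    omega

theorem countInterlace_of_sign_pattern {D : Multiset ℝ} (hD : D.Nodup) {u : ℝ[X]} {e : ℕ}
    (he : e ≤ 1) (hlc : 0 < u.leadingCoeff) (hdeg : u.natDegree = card D + e)
    (hsign : ∀ t ∈ D, 0 ≤ (-1 : ℝ) ^ (card D + countLe D t + 1) * u.eval t) :
    card u.roots = u.natDegree ∧ CountInterlace e D u.roots := by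
  obtain ⟨s, hs, hsgn, hsD⟩ := exists_alternating_points hD he hlc hdeg hsign
  exact countInterlace_of_alternating_points he (leadingCoeff_ne_zero.1 hlc.ne') hdeg hs hsgn hsD

theorem leadingCoeff_add_pos {p q : ℝ[X]} (hp : 0 < p.leadingCoeff) (hq : 0 < q.leadingCoeff) :
    0 < (p + q).leadingCoeff ∧ (p + q).natDegree = max p.natDegree q.natDegree := by
  wlog h : p.natDegree ≤ q.natDegree generalizing p q
  · simpa [add_comm, max_comm] using this hq hp (le_of_not_ge h)
  rw [max_eq_right h]
  rcases h.lt_or_eq with h | h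
  · have hd := degree_lt_degree h
    rw [leadingCoeff_add_of_degree_lt hd, natDegree_add_eq_right_of_degree_lt hd]
    exact ⟨hq, rfl⟩
  · have hd : p.degree = q.degree := by
      rw [degree_eq_natDegree (leadingCoeff_ne_zero.1 hp.ne'),
        degree_eq_natDegree (leadingCoeff_ne_zero.1 hq.ne'), h]
    have hne : p.leadingCoeff + q.leadingCoeff ≠ 0 := (add_pos hp hq).ne'
    have hdeg : (p + q).degree = q.degree := by
      rw [degree_add_eq_of_leadingCoeff_add_ne_zero hne, hd, max_self]
    rw [leadingCoeff_add_of_degree_eq hd hne, natDegree_eq_of_degree_eq hdeg]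
    exact ⟨add_pos hp hq, rfl⟩

section ProdXSubC

variable (M : Multiset ℝ) {p : ℝ[X]}

theorem roots_prod_X_sub_C_mul (hp : p ≠ 0) :
    ((M.map (X - C ·)).prod * p).roots = M + p.roots := by
  rw [roots_mul (mul_ne_zero (monic_multisetProd_X_sub_C M).ne_zero hp),
    roots_multiset_prod_X_sub_C]

theorem natDegree_prod_X_sub_C_mul (hp : p ≠ 0) :
    ((M.map (X - C ·)).prod * p).natDegree = card M + p.natDegree := by
  rw [(monic_multisetProd_X_sub_C M).natDegree_mul' hp, natDegree_multiset_prod_X_sub_C_eq_card]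

theorem leadingCoeff_prod_X_sub_C_mul :
    ((M.map (X - C ·)).prod * p).leadingCoeff = p.leadingCoeff :=
  leadingCoeff_monic_mul (monic_multisetProd_X_sub_C M)

end ProdXSubC

theorem exists_factor_of_countInterlace {F G : ℝ[X]} {e : ℕ} (hF : card F.roots = F.natDegree)
    (hG : card G.roots = G.natDegree) (hlc : 0 < G.leadingCoeff)
    (hdeg : G.natDegree = F.natDegree + e) (h : CountInterlace e F.roots G.roots) :
    ∃ g : ℝ[X], G = ((F.roots - F.roots.dedup).map (X - C ·)).prod * g ∧
      0 < g.leadingCoeff ∧ g.natDegree = card F.roots.dedup + e ∧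
      ∀ t ∈ F.roots.dedup,
        0 ≤ (-1 : ℝ) ^ (card F.roots.dedup + countLe F.roots.dedup t + 1) * g.eval t := by
  set M := F.roots - F.roots.dedup
  set D := F.roots.dedup
  have hMD : M + D = F.roots := tsub_add_cancel_of_le (dedup_le _)
  obtain ⟨g, rfl⟩ := (prod_X_sub_C_dvd_iff_le_roots (leadingCoeff_ne_zero.1 hlc.ne') M).2
    (sub_dedup_le_of_countInterlace h)
  have hg : g ≠ 0 := right_ne_zero_of_mul (leadingCoeff_ne_zero.1 hlc.ne')
  rw [roots_prod_X_sub_C_mul _ hg] at hG h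
  rw [natDegree_prod_X_sub_C_mul _ hg] at hG hdeg
  rw [leadingCoeff_prod_X_sub_C_mul] at hlc
  have hD : CountInterlace e D g.roots := (countInterlace_add_left_iff M D g.roots).1 (by rwa [hMD])
  have hcard : card F.roots = card M + card D := by rw [← card_add, hMD]
  rw [card_add] at hG
  have hdeg' : g.natDegree = card D + e := by omega
  exact ⟨g, rfl, hlc, hdeg', fun t ht => sign_eval_of_countInterlace (by omega) hlc hdeg' hD ht⟩

theorem countInterlace_add {F G H : ℝ[X]} (hF : card F.roots = F.natDegree)
    (hG : card G.roots = G.natDegree) (hH : card H.roots = H.natDegree)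
    (hGlc : 0 < G.leadingCoeff) (hHlc : 0 < H.leadingCoeff) {eg eh : ℕ} (heg : eg ≤ 1)
    (heh : eh ≤ 1) (hGd : G.natDegree = F.natDegree + eg) (hHd : H.natDegree = F.natDegree + eh)
    (hFG : CountInterlace eg F.roots G.roots) (hFH : CountInterlace eh F.roots H.roots) :
    card (G + H).roots = (G + H).natDegree ∧ (G + H).natDegree = F.natDegree + max eg eh ∧
      CountInterlace (max eg eh) F.roots (G + H).roots := by
  have hMD : F.roots - F.roots.dedup + F.roots.dedup = F.roots := tsub_add_cancel_of_le (dedup_le _)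
  have hFdeg : F.natDegree = card (F.roots - F.roots.dedup) + card F.roots.dedup := by
    rw [← card_add, hMD, hF]
  obtain ⟨g, rfl, hglc, hgd, hgs⟩ := exists_factor_of_countInterlace hF hG hGlc hGd hFG
  obtain ⟨h, rfl, hhlc, hhd, hhs⟩ := exists_factor_of_countInterlace hF hH hHlc hHd hFH
  obtain ⟨hlc, hdeg⟩ := leadingCoeff_add_pos hglc hhlc
  have hgh : g + h ≠ 0 := leadingCoeff_ne_zero.1 hlc.ne'
  obtain ⟨hroots, hci⟩ := countInterlace_of_sign_pattern (nodup_dedup F.roots) (max_le heg heh) hlc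
    (by omega) fun t ht => by rw [eval_add, mul_add]; exact add_nonneg (hgs t ht) (hhs t ht)
  rw [← mul_add, roots_prod_X_sub_C_mul _ hgh, natDegree_prod_X_sub_C_mul _ hgh, card_add, hroots]
  refine ⟨rfl, by omega, ?_⟩
  have := (countInterlace_add_left_iff (F.roots - F.roots.dedup) _ _).2 hci
  rwa [hMD] at this

theorem prec_add {F G H : ℝ[X]} (hG : Standard G) (hH : Standard H) (hFG : Prec F G)
    (hFH : Prec F H) : Prec F (G + H) := by
  rcases hG with rfl | hGlc
  · simpa using hFH
  rcases hH with rfl | hHlc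
  · simpa using hFG
  rcases hFG with hF | hG0 | ⟨hFr, hGr, hFG⟩
  · exact .inl hF
  · exact absurd hG0 (leadingCoeff_ne_zero.1 hGlc.ne')
  rcases hFH with hF | hH0 | ⟨-, hHr, hFH⟩
  · exact .inl hF
  · exact absurd hH0 (leadingCoeff_ne_zero.1 hHlc.ne')
  rw [realRooted_iff_card_roots] at hFr hGr hHr
  obtain ⟨eg, heg, hGd, hFG⟩ := (interlaces_or_altLeft_iff hFr hGr).1 hFG
  obtain ⟨eh, heh, hHd, hFH⟩ := (interlaces_or_altLeft_iff hFr hHr).1 hFH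
  obtain ⟨hroots, hdeg, hci⟩ := countInterlace_add hFr hGr hHr hGlc hHlc heg heh hGd hHd hFG hFH
  exact .inr (.inr ⟨realRooted_iff_card_roots.2 hFr, realRooted_iff_card_roots.2 hroots,
    (interlaces_or_altLeft_iff hFr hroots).2 ⟨_, max_le heg heh, hdeg, hci⟩⟩)

end Interlacing

theorem Standard.C_mul {P : ℝ[X]} (hP : Standard P) {c : ℝ} (hc : 0 < c) : Standard (C c * P) := by
  rcases hP with rfl | hP
  · exact .inl (mul_zero _)
  · exact .inr (by rw [leadingCoeff_mul, leadingCoeff_C]; positivity)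

theorem Standard.X_mul {P : ℝ[X]} (hP : Standard P) : Standard (X * P) := by
  rcases hP with rfl | hP
  · exact .inl (mul_zero _)
  · exact .inr (by rwa [leadingCoeff_mul, leadingCoeff_X, one_mul])

theorem Standard.add {P Q : ℝ[X]} (hP : Standard P) (hQ : Standard Q) : Standard (P + Q) := by
  rcases hP with rfl | hP
  · rwa [zero_add]
  rcases hQ with rfl | hQ
  · rw [add_zero]
    exact .inr hP
  · exact .inr (Interlacing.leadingCoeff_add_pos hP hQ).1

theorem stmt14_general (A B P Q S T : Polynomial ℝ)
    (hP : Standard P) (hQ : Standard Q)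
    (hS : Standard S) (hT : Standard T)
    (h1 : InterpSquare A B P Q) (h2 : InterpSquare A B S T) :
    InterpSquare A B (P + S) (Q + T) := by
  intro l r hl hr
  constructor
  · rw [show C l * (P + S) + C r * (Q + T) = (C l * P + C r * Q) + (C l * S + C r * T) by ring]
    exact Interlacing.prec_add ((hP.C_mul hl).add (hQ.C_mul hr)) ((hS.C_mul hl).add (hT.C_mul hr))
      (h1 l r hl hr).1 (h2 l r hl hr).1
  · rw [show C l * (Q + T) + C r * (X * (P + S)) =
      (C l * Q + C r * (X * P)) + (C l * T + C r * (X * S)) by ring]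
    exact Interlacing.prec_add ((hQ.C_mul hl).add (hP.X_mul.C_mul hr))
      ((hT.C_mul hl).add (hS.X_mul.C_mul hr)) (h1 l r hl hr).2 (h2 l r hl hr).2

/-- Lemma 4.3: if `(A, B, P, Q)` and `(A, B, S, T)` are interpolatory squares (all six
polynomials standard with only real nonpositive zeros) and `A ≢ 0` or `B ≢ 0`, then
`(A, B, P + S, Q + T)` is an interpolatory square. -/
theorem stmt14 (A B P Q S T : Polynomial ℝ)
    (hA : Standard A) (hB : Standard B) (hP : Standard P) (hQ : Standard Q)
    (hS : Standard S) (hT : Standard T)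
    (hA' : OnlyNonposZeros A) (hB' : OnlyNonposZeros B) (hP' : OnlyNonposZeros P)
    (hQ' : OnlyNonposZeros Q) (hS' : OnlyNonposZeros S) (hT' : OnlyNonposZeros T)
    (h0 : A ≠ 0 ∨ B ≠ 0)
    (h1 : InterpSquare A B P Q) (h2 : InterpSquare A B S T) :
    InterpSquare A B (P + S) (Q + T) :=
  stmt14_general A B P Q S T hP hQ hS hT h1 h2
end
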